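/- arXiv:2605.18110 — 8 statements merged into one kernel-verified Lean document; each statement's English description precedes it below -/
import Mathlib

section
/- Let n ≥ 1 and let f be a polynomial in n variables with real coefficients satisfying the smoothness assumption (S). Let C be a connected component of S = {x ∈ ℝⁿ : f(x) ≠ 0} and let B be a connected component of the boundary closure(C) \ C of C (closure in the Euclidean topology). Then B is a connected component of the real algebraic set Z(f) = {x ∈ ℝⁿ : f(x) = 0}. -/
/-!
At a real zero of `f`, (S) makes the gradient of `f` nonzero, so the implicit function theorem
straightens `Z(f)` near it into a hyperplane. Hence every point of `S` near `z ∈ Z(f)` lies in a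
connected piece of `S` (one side of the hyperplane) whose closure contains all of `Z(f)` near `z`.
If `z ∈ closure C`, then `C` contains such a piece, so `Z(f) ∩ closure C` is a neighbourhood of `z`
in `Z(f)`. Since components of the open set `S` are open, `closure C \ C = Z(f) ∩ closure C`; this
set is thus open and closed in `Z(f)`, and its connected components are components of `Z(f)`.
-/

open Set Topology Filter MvPolynomial

namespace MvPolynomial

variable {𝕜 σ : Type*} [NontriviallyNormedField 𝕜] [Fintype σ]

noncomputable def fderivEval (p : MvPolynomial σ 𝕜) (x : σ → 𝕜) : (σ → 𝕜) →L[𝕜] 𝕜 :=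
  ∑ j, eval x (pderiv j p) • ContinuousLinearMap.proj j

lemma fderivEval_apply (p : MvPolynomial σ 𝕜) (x v : σ → 𝕜) :
    fderivEval p x v = ∑ j, eval x (pderiv j p) * v j := by
  simp [fderivEval]

lemma fderivEval_single [DecidableEq σ] (p : MvPolynomial σ 𝕜) (x : σ → 𝕜) (i : σ) :
    fderivEval p x (Pi.single i 1) = eval x (pderiv i p) := by
  simp [fderivEval_apply, Pi.single_apply]

theorem hasStrictFDerivAt_eval (p : MvPolynomial σ 𝕜) (x : σ → 𝕜) :
    HasStrictFDerivAt (fun y => eval y p) (fderivEval p x) x := by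
  classical
  induction p using MvPolynomial.induction_on with
  | C a =>
    have : fderivEval (C a : MvPolynomial σ 𝕜) x = 0 := by ext v; simp [fderivEval_apply]
    simpa [this] using hasStrictFDerivAt_const a x
  | add p q hp hq =>
    have : fderivEval (p + q) x = fderivEval p x + fderivEval q x := by
      ext v; simp [fderivEval_apply, add_mul, Finset.sum_add_distrib]
    simp only [map_add, this]
    exact hp.add hq
  | mul_X p j hp =>
    have : fderivEval (p * X j) x =
        eval x p • ContinuousLinearMap.proj j + x j • fderivEval p x := by
      ext v
      simp [fderivEval_apply, Pi.single_apply, mul_add, Finset.sum_add_distrib, Finset.mul_sum,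
        apply_ite, mul_comm, mul_left_comm]
    simp only [map_mul, eval_X, this]
    exact hp.mul (ContinuousLinearMap.proj (R := 𝕜) (φ := fun _ : σ => 𝕜) j).hasStrictFDerivAt

end MvPolynomial

section Topology

variable {X : Type*} [TopologicalSpace X]

theorem IsOpen.closure_connectedComponentIn_diff [LocallyConnectedSpace X] {S : Set X}
    (hS : IsOpen S) (x : X) :
    closure (connectedComponentIn S x) \ connectedComponentIn S x =
      Sᶜ ∩ closure (connectedComponentIn S x) := by
  ext v
  refine ⟨fun ⟨hv, hvC⟩ => ⟨fun hvS => hvC ?_, hv⟩,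
    fun ⟨hvS, hv⟩ => ⟨hv, fun hvC => hvS (connectedComponentIn_subset _ _ hvC)⟩⟩
  obtain ⟨w, hwv, hwx⟩ := mem_closure_iff.1 hv _ hS.connectedComponentIn
    (mem_connectedComponentIn hvS)
  rw [connectedComponentIn_eq hwx, ← connectedComponentIn_eq hwv]
  exact mem_connectedComponentIn hvS

theorem connectedComponentIn_inter_eq_of_isClosed_of_mem_nhdsWithin {Z K : Set X}
    (hK : IsClosed K) (hZK : ∀ z ∈ Z ∩ K, Z ∩ K ∈ 𝓝[Z] z) {y : X} (hy : y ∈ Z ∩ K) :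
    connectedComponentIn (Z ∩ K) y = connectedComponentIn Z y := by
  refine (connectedComponentIn_mono _ inter_subset_left).antisymm
    (isPreconnected_connectedComponentIn.subset_connectedComponentIn
      (mem_connectedComponentIn hy.1) ?_)
  set T := connectedComponentIn Z y
  have hTZ : T ⊆ Z := connectedComponentIn_subset _ _
  set O := interior (Z ∩ K ∪ Zᶜ)
  have hO : Z ∩ O ⊆ K := fun v ⟨hvZ, hvO⟩ =>
    ((interior_subset hvO).resolve_right (not_not.2 hvZ)).2
  have hKO : Z ∩ K ⊆ O := fun z hz => by
    rw [mem_interior_iff_mem_nhds]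
    filter_upwards [mem_nhdsWithin_iff_eventually.1 (hZK z hz)] with v hv
    by_cases hvZ : v ∈ Z
    exacts [Or.inl (hv hvZ), Or.inr hvZ]
  have hTO : T ⊆ O := by
    refine ((isPreconnected_iff_subset_of_disjoint.1 isPreconnected_connectedComponentIn)
      O Kᶜ isOpen_interior hK.isOpen_compl (fun v hv => ?_) ?_).resolve_right
      fun hTK => hTK (mem_connectedComponentIn hy.1) hy.2
    · by_cases hvK : v ∈ K
      exacts [Or.inl (hKO ⟨hTZ hv, hvK⟩), Or.inr hvK]
    · exact eq_empty_of_forall_notMem fun v ⟨hv, hvO, hvK⟩ => hvK (hO ⟨hTZ hv, hvO⟩)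
  exact fun v hv => ⟨hTZ hv, hO ⟨hTZ hv, hTO hv⟩⟩

end Topology

section RegularZeroSet

variable {E : Type*} [NormedAddCommGroup E] [NormedSpace ℝ E] [CompleteSpace E]

theorem HasStrictFDerivAt.exists_mem_nhds_isPreconnected_closure {g : E → ℝ} {g' : E →L[ℝ] ℝ}
    {z : E} (hg : HasStrictFDerivAt g g' z) (hg' : g' ≠ 0) :
    ∃ U ∈ 𝓝 z, ∀ c ∈ U, g c ≠ 0 → ∃ R ⊆ {y | g y ≠ 0},
      IsPreconnected R ∧ c ∈ R ∧ U ∩ g ⁻¹' {0} ⊆ closure R := by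
  have hrange : LinearMap.range (g' : E →ₗ[ℝ] ℝ) = ⊤ :=
    LinearMap.range_eq_top.2 (LinearMap.surjective (by exact_mod_cast hg'))
  set φ := hg.implicitToOpenPartialHomeomorph g g' hrange
  have hφ : ∀ y, (φ y).1 = g y := fun _ => rfl
  have hz : z ∈ φ.source := hg.mem_implicitToOpenPartialHomeomorph_source hrange
  obtain ⟨ε, hε, hV⟩ := Metric.isOpen_iff.1 φ.open_target (φ z) (φ.map_source hz)
  set V := Metric.ball (φ z) ε
  refine ⟨φ.source ∩ φ ⁻¹' V, inter_mem (φ.open_source.mem_nhds hz)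
    ((φ.continuousAt hz).preimage_mem_nhds (Metric.ball_mem_nhds _ hε)), ?_⟩
  rintro c ⟨hcφ, hcV⟩ hc
  -- the side of the hypersurface `g = 0` on which `c` lies, read in the chart `φ`
  set H := V ∩ (fun p => g c * p.1) ⁻¹' Ioi 0
  have hHconv : Convex ℝ H := (convex_ball _ _).inter ((convex_Ioi 0).linear_preimage
    (g c • (LinearMap.fst ℝ ℝ _)))
  have hcH : φ c ∈ H := ⟨hcV, by simpa [hφ] using mul_self_pos.2 hc⟩
  have hsymm : ∀ p ∈ V, φ (φ.symm p) = p := fun p hp => φ.right_inv (hV hp)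
  refine ⟨φ.symm '' H, ?_, hHconv.isPreconnected.image _
      (φ.continuousOn_symm.mono (inter_subset_left.trans hV)), ⟨φ c, hcH, φ.left_inv hcφ⟩, ?_⟩
  · rintro _ ⟨p, ⟨hpV, hp⟩, rfl⟩
    rw [mem_ofPred_eq, ← hφ, hsymm p hpV]
    exact right_ne_zero_of_mul (ne_of_gt hp)
  rintro y ⟨⟨hyφ, hyV⟩, hy⟩
  have hseg : openSegment ℝ (φ y) (φ c) ⊆ H := by
    rintro _ ⟨a, b, ha, hb, hab, rfl⟩
    refine ⟨(convex_ball _ _).openSegment_subset hyV hcV ⟨a, b, ha, hb, hab, rfl⟩, ?_⟩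
    have hgy : g y = 0 := hy
    have : g c * (a * g y + b * g c) = b * (g c * g c) := by rw [hgy]; ring
    simpa [hφ, this] using mul_pos hb (mul_self_pos.2 hc)
  have hsegV : closure (openSegment ℝ (φ y) (φ c)) ⊆ φ.target := by
    rw [closure_openSegment]
    exact ((convex_ball _ _).segment_subset hyV hcV).trans hV
  have hy_seg : φ y ∈ closure (openSegment ℝ (φ y) (φ c)) := by
    rw [closure_openSegment]
    exact left_mem_segment ℝ _ _
  exact closure_mono (image_mono hseg)
    ((φ.continuousOn_symm.mono hsegV).image_closure ⟨φ y, hy_seg, φ.left_inv hyφ⟩)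

theorem inter_closure_connectedComponentIn_mem_nhdsWithin {g : E → ℝ}
    (hreg : ∀ z, g z = 0 → ∃ g' : E →L[ℝ] ℝ, HasStrictFDerivAt g g' z ∧ g' ≠ 0) (x : E)
    {z : E} (hz : z ∈ {v | g v = 0} ∩ closure (connectedComponentIn {v | g v ≠ 0} x)) :
    {v | g v = 0} ∩ closure (connectedComponentIn {v | g v ≠ 0} x) ∈ 𝓝[{v | g v = 0}] z := by
  obtain ⟨g', hg, hg'⟩ := hreg z hz.1
  obtain ⟨U, hU, hUR⟩ := hg.exists_mem_nhds_isPreconnected_closure hg'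
  obtain ⟨c, hcU, hcC⟩ := mem_closure_iff_nhds.1 hz.2 U hU
  obtain ⟨R, hRS, hR, hcR, hUR⟩ := hUR c hcU (connectedComponentIn_subset _ _ hcC)
  have hRC : R ⊆ connectedComponentIn {v | g v ≠ 0} x :=
    connectedComponentIn_eq hcC ▸ hR.subset_connectedComponentIn hcR hRS
  exact mem_nhdsWithin_iff_exists_mem_nhds_inter.2
    ⟨U, hU, fun v hv => ⟨hv.2, closure_mono hRC (hUR hv)⟩⟩

theorem connectedComponentIn_closure_connectedComponentIn_diff {g : E → ℝ} (hg : Continuous g)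
    (hreg : ∀ z, g z = 0 → ∃ g' : E →L[ℝ] ℝ, HasStrictFDerivAt g g' z ∧ g' ≠ 0) (x : E) {y : E}
    (hy : y ∈ closure (connectedComponentIn {v | g v ≠ 0} x) \
      connectedComponentIn {v | g v ≠ 0} x) :
    connectedComponentIn (closure (connectedComponentIn {v | g v ≠ 0} x) \
      connectedComponentIn {v | g v ≠ 0} x) y = connectedComponentIn {v | g v = 0} y := by
  have hS : IsOpen {v | g v ≠ 0} := isOpen_ne_fun hg continuous_const
  have hZ : {v | g v ≠ 0}ᶜ = {v | g v = 0} := by ext; simp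
  rw [hS.closure_connectedComponentIn_diff, hZ] at hy ⊢
  exact connectedComponentIn_inter_eq_of_isClosed_of_mem_nhdsWithin isClosed_closure
    (fun z hz => inter_closure_connectedComponentIn_mem_nhdsWithin hreg x hz) hy

end RegularZeroSet

theorem stmt3_general (n : ℕ) (f : MvPolynomial (Fin n) ℝ)
    (hS : ∀ z : Fin n → ℂ,
      MvPolynomial.eval z (MvPolynomial.map (algebraMap ℝ ℂ) f) = 0 →
      ∃ i, MvPolynomial.eval z
        (MvPolynomial.map (algebraMap ℝ ℂ) (MvPolynomial.pderiv i f)) ≠ 0)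
    (C B : Set (Fin n → ℝ))
    (hC : ∃ x ∈ {x : Fin n → ℝ | MvPolynomial.eval x f ≠ 0},
      C = connectedComponentIn {x : Fin n → ℝ | MvPolynomial.eval x f ≠ 0} x)
    (hB : ∃ y ∈ closure C \ C, B = connectedComponentIn (closure C \ C) y) :
    ∃ z ∈ {x : Fin n → ℝ | MvPolynomial.eval x f = 0},
      B = connectedComponentIn {x : Fin n → ℝ | MvPolynomial.eval x f = 0} z := by
  obtain ⟨x, -, rfl⟩ := hC
  obtain ⟨y, hy, rfl⟩ := hB
  have hreg : ∀ z : Fin n → ℝ, eval z f = 0 →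
      ∃ g' : (Fin n → ℝ) →L[ℝ] ℝ, HasStrictFDerivAt (fun v => eval v f) g' z ∧ g' ≠ 0 := by
    intro z hz
    have hcast (p : MvPolynomial (Fin n) ℝ) :
        eval (algebraMap ℝ ℂ ∘ z) (map (algebraMap ℝ ℂ) p) = algebraMap ℝ ℂ (eval z p) := by
      rw [eval_map, eval₂_comp]
    obtain ⟨i, hi⟩ := hS _ (by rw [hcast, hz, map_zero])
    refine ⟨_, hasStrictFDerivAt_eval f z, fun h => hi ?_⟩
    rw [hcast, ← fderivEval_single, h, zero_apply, map_zero]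
  have hB := connectedComponentIn_closure_connectedComponentIn_diff (continuous_eval f) hreg x hy
  exact ⟨y, connectedComponentIn_subset _ _ (hB ▸ mem_connectedComponentIn hy), hB⟩

/-- Under the smoothness assumption (S), every connected component `B` of the boundary
`closure C \ C` of a connected component `C` of `S = {x | f(x) ≠ 0}` is a connected
component of the real algebraic set `Z(f) = {x | f(x) = 0}`. -/
theorem stmt3 (n : ℕ) (hn : 1 ≤ n) (f : MvPolynomial (Fin n) ℝ)
    (hS : ∀ z : Fin n → ℂ,
      MvPolynomial.eval z (MvPolynomial.map (algebraMap ℝ ℂ) f) = 0 →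
      ∃ i, MvPolynomial.eval z
        (MvPolynomial.map (algebraMap ℝ ℂ) (MvPolynomial.pderiv i f)) ≠ 0)
    (C B : Set (Fin n → ℝ))
    (hC : ∃ x ∈ {x : Fin n → ℝ | MvPolynomial.eval x f ≠ 0},
      C = connectedComponentIn {x : Fin n → ℝ | MvPolynomial.eval x f ≠ 0} x)
    (hB : ∃ y ∈ closure C \ C, B = connectedComponentIn (closure C \ C) y) :
    ∃ z ∈ {x : Fin n → ℝ | MvPolynomial.eval x f = 0},
      B = connectedComponentIn {x : Fin n → ℝ | MvPolynomial.eval x f = 0} z :=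
  stmt3_general n f hS C B hC hB
end

section
/- Let n ≥ 1 and let f be a polynomial in n variables with real coefficients satisfying the smoothness assumption (S). Then for every point ξ in the boundary closure(S) \ S of S = {x ∈ ℝⁿ : f(x) ≠ 0}, the set of connected components C of S such that ξ ∈ closure(C) has at most two elements. -/
open MvPolynomial Metric

/-- Complexification commutes with evaluation at real points. -/
theorem evalC_mv {n : ℕ} (p : MvPolynomial (Fin n) ℝ) (ξ : Fin n → ℝ) :
    MvPolynomial.eval (fun j => (ξ j : ℂ)) (MvPolynomial.map (algebraMap ℝ ℂ) p)
      = ((MvPolynomial.eval ξ p : ℝ) : ℂ) := by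
  rw [MvPolynomial.eval_map]
  rw [show ((MvPolynomial.eval ξ p : ℝ) : ℂ)
    = algebraMap ℝ ℂ (MvPolynomial.eval₂ (RingHom.id ℝ) ξ p) from rfl]
  rw [MvPolynomial.eval₂_comp_left]
  rfl

/-- The derivative of evaluation of a multivariate polynomial, in terms of partial
derivatives. -/
theorem hasFDerivAt_eval_mv {n : ℕ} (p : MvPolynomial (Fin n) ℝ) (x : Fin n → ℝ) :
    HasFDerivAt (fun y => MvPolynomial.eval y p)
      (∑ j, MvPolynomial.eval x (MvPolynomial.pderiv j p) •
        (ContinuousLinearMap.proj j : (Fin n → ℝ) →L[ℝ] ℝ)) x := by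
  induction p using MvPolynomial.induction_on with
  | C a =>
      simp only [eval_C, map_C]
      rw [show (∑ j, MvPolynomial.eval x (MvPolynomial.pderiv j (C a : MvPolynomial (Fin n) ℝ)) •
        (ContinuousLinearMap.proj j : (Fin n → ℝ) →L[ℝ] ℝ)) = 0 from by simp]
      exact hasFDerivAt_const _ _
  | add p q hp hq =>
      simp only [map_add]
      refine (hp.add hq).congr_fderiv (Eq.symm ?_)
      simp [add_smul, Finset.sum_add_distrib]
  | mul_X p i hp =>
      have hi : HasFDerivAt (fun y : Fin n → ℝ => y i)
          (ContinuousLinearMap.proj i : (Fin n → ℝ) →L[ℝ] ℝ) x :=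
        hasFDerivAt_apply i x
      have := hp.mul hi
      simp only [map_mul, eval_X] at this ⊢
      refine this.congr_fderiv (Eq.symm ?_)
      ext h
      simp only [ContinuousLinearMap.coe_sum', Finset.sum_apply,
        ContinuousLinearMap.coe_smul', Pi.smul_apply, ContinuousLinearMap.proj_apply,
        ContinuousLinearMap.add_apply, ContinuousLinearMap.smul_apply, smul_eq_mul,
        pderiv_mul, pderiv_X, map_add, map_mul, eval_X, Finset.sum_apply,
        ContinuousLinearMap.coe_smul']
      have e1 : ∀ j : Fin n, (MvPolynomial.eval x)
          ((Pi.single j 1 : Fin n → MvPolynomial (Fin n) ℝ) i) = if i = j then 1 else 0 := by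
        intro j; rw [Pi.single_apply]; split_ifs with h <;> simp_all
      simp_rw [e1, mul_ite, mul_one, mul_zero, add_mul, ite_mul, zero_mul,
        Finset.sum_add_distrib, Finset.sum_ite_eq Finset.univ i, Finset.mem_univ, if_true,
        Finset.mul_sum]
      rw [add_comm]
      congr 1
      exact Finset.sum_congr rfl fun j _ => by ring

/-- The evaluation map of a multivariate polynomial is strictly differentiable. -/
theorem hasStrictFDerivAt_eval_mv {n : ℕ} (p : MvPolynomial (Fin n) ℝ) (x : Fin n → ℝ) :
    HasStrictFDerivAt (fun y => MvPolynomial.eval y p)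
      (∑ j, MvPolynomial.eval x (MvPolynomial.pderiv j p) •
        (ContinuousLinearMap.proj j : (Fin n → ℝ) →L[ℝ] ℝ)) x := by
  have h1 : AnalyticAt ℝ (fun y => MvPolynomial.eval y p) x :=
    (AnalyticOnNhd.eval_mvPolynomial p) x (Set.mem_univ x)
  have h2 := (h1.contDiffAt (n := 1)).hasStrictFDerivAt one_ne_zero
  rwa [(hasFDerivAt_eval_mv p x).fderiv] at h2

/-- Under the smoothness assumption (S), any point `ξ` of the boundary `closure S \ S` of
`S = {x | f(x) ≠ 0}` lies in the closure of at most two connected components of `S`. -/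
theorem stmt4 (n : ℕ) (hn : 1 ≤ n) (f : MvPolynomial (Fin n) ℝ)
    (hS : ∀ z : Fin n → ℂ,
      MvPolynomial.eval z (MvPolynomial.map (algebraMap ℝ ℂ) f) = 0 →
      ∃ i, MvPolynomial.eval z
        (MvPolynomial.map (algebraMap ℝ ℂ) (MvPolynomial.pderiv i f)) ≠ 0)
    (ξ : Fin n → ℝ)
    (hξ : ξ ∈ closure {x : Fin n → ℝ | MvPolynomial.eval x f ≠ 0} \
      {x : Fin n → ℝ | MvPolynomial.eval x f ≠ 0}) :
    {C : Set (Fin n → ℝ) |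
      (∃ x ∈ {x : Fin n → ℝ | MvPolynomial.eval x f ≠ 0},
        C = connectedComponentIn {x : Fin n → ℝ | MvPolynomial.eval x f ≠ 0} x) ∧
      ξ ∈ closure C}.encard ≤ 2 := by
  classical
  have hfξ : MvPolynomial.eval ξ f = 0 := not_not.mp hξ.2
  obtain ⟨i, hi⟩ := hS (fun j => (ξ j : ℂ)) (by rw [evalC_mv, hfξ]; simp)
  have ha : MvPolynomial.eval ξ (MvPolynomial.pderiv i f) ≠ 0 := by
    intro h; exact hi (by rw [evalC_mv, h]; simp)
  set a : ℝ := MvPolynomial.eval ξ (MvPolynomial.pderiv i f) with ha_def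
  set Df : (Fin n → ℝ) →L[ℝ] ℝ := ∑ j, MvPolynomial.eval ξ (MvPolynomial.pderiv j f) •
      (ContinuousLinearMap.proj j : (Fin n → ℝ) →L[ℝ] ℝ) with hDf
  set v : Fin n → ℝ := Pi.single i 1 with hv
  set ℓ : (Fin n → ℝ) →L[ℝ] ℝ := Df - ContinuousLinearMap.proj i with hℓ
  have hDfv : Df v = a := by
    rw [hDf]
    simp only [ContinuousLinearMap.coe_sum', Finset.sum_apply,
      ContinuousLinearMap.coe_smul', Pi.smul_apply, ContinuousLinearMap.proj_apply,
      smul_eq_mul, hv]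
    rw [Finset.sum_eq_single i]
    · simp [ha_def]
    · intro j _ hj; simp [Pi.single_eq_of_ne hj]
    · simp
  have hℓv : ℓ v = a - 1 := by have := hDfv; rw [hv] at this; simp [hℓ, this, hv]
  set D : (Fin n → ℝ) →L[ℝ] (Fin n → ℝ) :=
    ContinuousLinearMap.id ℝ _ + ℓ.smulRight v with hD
  set D' : (Fin n → ℝ) →L[ℝ] (Fin n → ℝ) :=
    ContinuousLinearMap.id ℝ _ - (a⁻¹ • ℓ).smulRight v with hD'
  have hleft : Function.LeftInverse D' D := by
    intro h
    simp only [hD, hD', ContinuousLinearMap.add_apply, ContinuousLinearMap.sub_apply,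
      ContinuousLinearMap.id_apply, ContinuousLinearMap.smulRight_apply,
      ContinuousLinearMap.smul_apply, map_add, map_smul, hℓv, smul_eq_mul]
    match_scalars <;> field_simp <;> ring
  have hright : Function.RightInverse D' D := by
    intro h
    simp only [hD, hD', ContinuousLinearMap.add_apply, ContinuousLinearMap.sub_apply,
      ContinuousLinearMap.id_apply, ContinuousLinearMap.smulRight_apply,
      ContinuousLinearMap.smul_apply, map_sub, map_smul, hℓv, smul_eq_mul]
    match_scalars <;> field_simp <;> ring
  set E : (Fin n → ℝ) ≃L[ℝ] (Fin n → ℝ) :=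
    ContinuousLinearEquiv.equivOfInverse D D' hleft hright with hEdef
  have hE : (E : (Fin n → ℝ) →L[ℝ] (Fin n → ℝ)) = D := rfl
  set φ : (Fin n → ℝ) → (Fin n → ℝ) :=
    fun y => y + (MvPolynomial.eval y f - y i) • v with hφ
  have h1 : HasStrictFDerivAt (fun y => MvPolynomial.eval y f) Df ξ := by
    rw [hDf]; exact hasStrictFDerivAt_eval_mv f ξ
  have h2 : HasStrictFDerivAt (fun y : Fin n → ℝ => y i)
      (ContinuousLinearMap.proj i : (Fin n → ℝ) →L[ℝ] ℝ) ξ :=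
    (ContinuousLinearMap.proj i : (Fin n → ℝ) →L[ℝ] ℝ).hasStrictFDerivAt (x := ξ)
  have h3 := (h1.sub h2).smul (hasStrictFDerivAt_const v ξ)
  have hφd : HasStrictFDerivAt φ (E : (Fin n → ℝ) →L[ℝ] (Fin n → ℝ)) ξ := by
    rw [hE, hD]
    have h4 := (hasStrictFDerivAt_id ξ).add h3
    refine h4.congr_fderiv (Eq.symm ?_)
    simp [hfξ, hℓ]
  set e := hφd.toOpenPartialHomeomorph φ with he
  have hsource : ξ ∈ e.source := hφd.mem_toOpenPartialHomeomorph_source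
  have hcoe : ⇑e = φ := hφd.toOpenPartialHomeomorph_coe
  have hval : ∀ x ∈ e.source, (e x) i = MvPolynomial.eval x f := by
    intro x _
    rw [hcoe]
    simp [hφ, hv, Pi.single_eq_same]
  obtain ⟨ε, εpos, hball⟩ := Metric.isOpen_iff.mp e.open_target (e ξ) (e.map_source hsource)
  -- the two local pieces of S near ξ
  set S := {x : Fin n → ℝ | MvPolynomial.eval x f ≠ 0} with hSdef
  set c := e ξ with hc
  set P : Set (Fin n → ℝ) := e.symm '' (ball c ε ∩ {y | 0 < y i}) with hP
  set N : Set (Fin n → ℝ) := e.symm '' (ball c ε ∩ {y | y i < 0}) with hN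
  have hlin : IsLinearMap ℝ (fun y : Fin n → ℝ => y i) := ⟨fun a b => rfl, fun c x => rfl⟩
  have hPsub : ∀ {t : Set (Fin n → ℝ)}, (ball c ε ∩ t) ⊆ e.target :=
    fun {t} => (Set.inter_subset_left).trans hball
  have hmem : ∀ {t : Set (Fin n → ℝ)} {x : Fin n → ℝ}, x ∈ e.symm '' (ball c ε ∩ t) →
      x ∈ e.source ∧ e x ∈ ball c ε ∩ t := by
    rintro t x ⟨y, hy, rfl⟩
    exact ⟨e.map_target (hPsub hy), by rwa [e.right_inv (hPsub hy)]⟩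
  have hPS : P ⊆ S := by
    intro x hx
    obtain ⟨hxs, hxb, hxi⟩ := hmem hx
    simp only [hSdef, Set.mem_setOf_eq]
    rw [← hval x hxs]
    exact ne_of_gt hxi
  have hNS : N ⊆ S := by
    intro x hx
    obtain ⟨hxs, hxb, hxi⟩ := hmem hx
    simp only [hSdef, Set.mem_setOf_eq]
    rw [← hval x hxs]
    exact ne_of_lt hxi
  have hPconn : IsPreconnected P :=
    ((convex_ball c ε).inter (convex_halfSpace_gt hlin 0)).isPreconnected.image _
      (e.continuousOn_symm.mono hPsub)
  have hNconn : IsPreconnected N :=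
    ((convex_ball c ε).inter (convex_halfSpace_lt hlin 0)).isPreconnected.image _
      (e.continuousOn_symm.mono hPsub)
  set V := e.source ∩ e ⁻¹' (ball c ε) with hV
  have hVopen : IsOpen V := e.isOpen_inter_preimage isOpen_ball
  have hξV : ξ ∈ V := ⟨hsource, mem_ball_self εpos⟩
  have hVS : ∀ x ∈ V, x ∈ S → x ∈ P ∪ N := by
    rintro x ⟨hxs, hxb⟩ hxS
    have hxi : (e x) i ≠ 0 := by rw [hval x hxs]; exact hxS
    have hx' : x = e.symm (e x) := (e.left_inv hxs).symm
    rcases hxi.lt_or_gt with h | h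
    · exact Or.inr ⟨e x, ⟨hxb, h⟩, hx'.symm⟩
    · exact Or.inl ⟨e x, ⟨hxb, h⟩, hx'.symm⟩
  set 𝒞 := {C : Set (Fin n → ℝ) |
      (∃ x ∈ S, C = connectedComponentIn S x) ∧ ξ ∈ closure C} with h𝒞
  have hsplit : ∀ C ∈ 𝒞, (C ∩ P).Nonempty ∨ (C ∩ N).Nonempty := by
    rintro C ⟨⟨x, hxS, rfl⟩, hCcl⟩
    obtain ⟨z, hzV, hzC⟩ := _root_.mem_closure_iff.mp hCcl V hVopen hξV
    have hzS : z ∈ S := connectedComponentIn_subset S x hzC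
    rcases hVS z hzV hzS with h | h
    · exact Or.inl ⟨z, hzC, h⟩
    · exact Or.inr ⟨z, hzC, h⟩
  have key : ∀ (T : Set (Fin n → ℝ)), IsPreconnected T → T ⊆ S →
      {C ∈ 𝒞 | (C ∩ T).Nonempty}.Subsingleton := by
    intro T hTconn hTS C1 hC1 C2 hC2
    obtain ⟨⟨⟨x1, hx1, rfl⟩, _⟩, z1, hz1C, hz1T⟩ := hC1
    obtain ⟨⟨⟨x2, hx2, rfl⟩, _⟩, z2, hz2C, hz2T⟩ := hC2
    have e1 : connectedComponentIn S x1 = connectedComponentIn S z1 :=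
      connectedComponentIn_eq hz1C
    have e2 : connectedComponentIn S x2 = connectedComponentIn S z2 :=
      connectedComponentIn_eq hz2C
    have hsub : T ⊆ connectedComponentIn S z1 :=
      hTconn.subset_connectedComponentIn hz1T hTS
    have : z2 ∈ connectedComponentIn S z1 := hsub hz2T
    rw [e1, e2, connectedComponentIn_eq this]
  have hsub2 : 𝒞 ⊆ {C ∈ 𝒞 | (C ∩ P).Nonempty} ∪ {C ∈ 𝒞 | (C ∩ N).Nonempty} := by
    intro C hC
    rcases hsplit C hC with h | h
    · exact Or.inl ⟨hC, h⟩
    · exact Or.inr ⟨hC, h⟩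
  calc 𝒞.encard ≤ ({C ∈ 𝒞 | (C ∩ P).Nonempty} ∪ {C ∈ 𝒞 | (C ∩ N).Nonempty}).encard :=
        Set.encard_mono hsub2
    _ ≤ {C ∈ 𝒞 | (C ∩ P).Nonempty}.encard + {C ∈ 𝒞 | (C ∩ N).Nonempty}.encard :=
        Set.encard_union_le _ _
    _ ≤ 1 + 1 := add_le_add
        (Set.encard_le_one_iff.mpr fun a b ha hb => key P hPconn hPS ha hb)
        (Set.encard_le_one_iff.mpr fun a b ha hb => key N hNconn hNS ha hb)
    _ = 2 := by norm_num
end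

section
/- Let n ≥ 1 and let f be a polynomial in n variables with real coefficients satisfying the smoothness assumption (S). Let C be a connected component of S = {x ∈ ℝⁿ : f(x) ≠ 0} and suppose ξ ∈ closure(C) \ C. Let a ∈ ℝⁿ satisfy ⟨∇f(ξ), a⟩ ≠ 0, and let δ > 0 be such that the univariate polynomial u ↦ f(ξ + u·a) has no root in the interval (−δ, δ) other than 0. Then for every real z with 0 < z < δ, either ξ + z·a ∈ C or ξ − z·a ∈ C. -/
open MvPolynomial Set

private lemma hasDerivAt_line (n : ℕ) (f : MvPolynomial (Fin n) ℝ) (x a : Fin n → ℝ) (t : ℝ) :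
    HasDerivAt (fun u : ℝ => MvPolynomial.eval (fun i => x i + u * a i) f)
      (∑ i, MvPolynomial.eval (fun i => x i + t * a i) (MvPolynomial.pderiv i f) * a i) t := by
  induction f using MvPolynomial.induction_on with
  | C r =>
      simpa using hasDerivAt_const t r
  | add p q hp hq =>
      have := hp.add hq
      simpa [Finset.sum_add_distrib, add_mul, Pi.add_def] using this
  | mul_X p j hp =>
      have h2 : HasDerivAt (fun u : ℝ => x j + u * a j) (a j) t :=
        (hasDerivAt_mul_const (a j)).const_add (x j)
      have := hp.mul h2
      simp only [eval_mul, eval_X, Pi.mul_def] at this ⊢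
      refine this.congr_deriv (Eq.symm ?_)
      simp only [pderiv_mul, pderiv_X, map_add, eval_mul, eval_X, add_mul,
        Finset.sum_add_distrib, Pi.single_apply, apply_ite (MvPolynomial.eval
          (fun i => x i + t * a i)), map_zero, map_one, ite_mul, zero_mul,
        mul_ite, mul_zero, mul_one, one_mul]
      rw [Finset.sum_ite_eq Finset.univ j (fun i => MvPolynomial.eval (fun i => x i + t * a i) p * a i)]
      simp only [Finset.mem_univ, if_true, Finset.sum_mul]
      congr 1
      exact Finset.sum_congr rfl fun i _ => by ring

private lemma same_sign (g : ℝ → ℝ) (hg : Continuous g) (u t : ℝ) (hut : u ≤ t)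
    (hne : ∀ w, u ≤ w → w ≤ t → g w ≠ 0) : 0 < g u * g t := by
  by_contra h
  push_neg at h
  have hprod : g u * g t < 0 :=
    lt_of_le_of_ne h (mul_ne_zero (hne u le_rfl hut) (hne t hut le_rfl))
  have h0 : (0:ℝ) ∈ Set.uIcc (g u) (g t) := by
    rw [Set.mem_uIcc]
    rcases mul_neg_iff.mp hprod with ⟨h1, h2⟩ | ⟨h1, h2⟩
    · exact Or.inr ⟨h2.le, h1.le⟩
    · exact Or.inl ⟨h1.le, h2.le⟩
  obtain ⟨w, hw, hw0⟩ := intermediate_value_uIcc (hg.continuousOn) h0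
  rw [Set.uIcc_of_le hut] at hw
  exact hne w hw.1 hw.2 hw0

private lemma line_continuous (n : ℕ) (f : MvPolynomial (Fin n) ℝ) (a : Fin n → ℝ) :
    Continuous (fun p : (Fin n → ℝ) × ℝ => MvPolynomial.eval (fun j => p.1 j + p.2 * a j) f) :=
  (MvPolynomial.continuous_eval f).comp (continuous_pi fun j =>
    ((continuous_apply j).comp continuous_fst).add (continuous_snd.mul continuous_const))

private lemma key (n : ℕ) (f : MvPolynomial (Fin n) ℝ) (ξ a : Fin n → ℝ) (z : ℝ) (hz : 0 < z)
    (hc : 0 < ∑ i, MvPolynomial.eval ξ (MvPolynomial.pderiv i f) * a i)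
    (hsign : ∀ t : ℝ, 0 < t → t ≤ z → 0 < MvPolynomial.eval (fun i => ξ i + t * a i) f) :
    ∃ ε > 0, ∀ x : Fin n → ℝ, dist x ξ < ε → 0 < MvPolynomial.eval x f →
      ∃ T : Set (Fin n → ℝ), IsPreconnected T ∧ (∀ y ∈ T, MvPolynomial.eval y f ≠ 0) ∧
        x ∈ T ∧ (fun i => ξ i + z * a i) ∈ T := by
  classical
  set G : (Fin n → ℝ) × ℝ → ℝ :=
    fun p => ∑ i, MvPolynomial.eval (fun j => p.1 j + p.2 * a j) (MvPolynomial.pderiv i f) * a i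
    with hGdef
  have hGcont : Continuous G := by
    apply continuous_finset_sum
    intro i _
    exact (line_continuous n (MvPolynomial.pderiv i f) a).mul continuous_const
  have hG0 : 0 < G (ξ, 0) := by
    simpa [hGdef] using hc
  -- derivative positivity region
  obtain ⟨r₁, hr₁, hball⟩ := Metric.isOpen_iff.mp (isOpen_lt continuous_const hGcont) (ξ, 0) hG0
  have hGpos : ∀ (x : Fin n → ℝ) (t : ℝ), dist x ξ < r₁ → |t| < r₁ → 0 < G (x, t) := by
    intro x t hx ht
    apply hball
    rw [Metric.mem_ball, Prod.dist_eq]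
    exact max_lt hx (by simpa [Real.dist_eq] using ht)
  set η : ℝ := min (r₁ / 2) z with hηdef
  have hη : 0 < η := lt_min (by linarith) hz
  have hηz : η ≤ z := min_le_right _ _
  have hηr : η < r₁ := lt_of_le_of_lt (min_le_left _ _) (by linarith)
  -- tube lemma part
  have tube : ∀ᶠ x in nhds ξ, ∀ t ∈ Set.Icc η z,
      0 < MvPolynomial.eval (fun j => x j + t * a j) f := by
    apply IsCompact.eventually_forall_of_forall_eventually (isCompact_Icc)
    intro t ht
    have hpos : 0 < MvPolynomial.eval (fun j => ξ j + t * a j) f :=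
      hsign t (lt_of_lt_of_le hη ht.1) ht.2
    exact (isOpen_lt continuous_const (line_continuous n f a)).mem_nhds hpos
  obtain ⟨ε₂, hε₂, htube⟩ := Metric.eventually_nhds_iff.mp tube
  refine ⟨min r₁ ε₂, lt_min hr₁ hε₂, ?_⟩
  intro x hx hFx
  have hxr₁ : dist x ξ < r₁ := lt_of_lt_of_le hx (min_le_left _ _)
  have hxε₂ : dist x ξ < ε₂ := lt_of_lt_of_le hx (min_le_right _ _)
  -- monotone part
  have hmono : StrictMonoOn (fun t : ℝ => MvPolynomial.eval (fun j => x j + t * a j) f)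
      (Set.Icc 0 η) := by
    apply strictMonoOn_of_deriv_pos (convex_Icc 0 η)
    · exact ((line_continuous n f a).comp (Continuous.prodMk_right x)).continuousOn
    · intro t ht
      rw [interior_Icc] at ht
      rw [(hasDerivAt_line n f x a t).deriv]
      exact hGpos x t hxr₁ (by rw [abs_of_pos ht.1]; linarith [ht.2])
  have hT₁pos : ∀ t ∈ Set.Icc (0:ℝ) z, 0 < MvPolynomial.eval (fun j => x j + t * a j) f := by
    intro t ht
    rcases le_or_gt t η with h | h
    · rcases eq_or_lt_of_le ht.1 with h0 | h0
      · have : (fun j => x j + t * a j) = x := by funext j; rw [← h0]; ring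
        rw [this]; exact hFx
      · have h1 : MvPolynomial.eval (fun j => x j + (0:ℝ) * a j) f <
            MvPolynomial.eval (fun j => x j + t * a j) f :=
          hmono (Set.mem_Icc.mpr ⟨le_rfl, hη.le⟩) (Set.mem_Icc.mpr ⟨ht.1, h⟩) h0
        have h2 : (fun j => x j + (0:ℝ) * a j) = x := by funext j; ring
        rw [h2] at h1
        exact lt_trans hFx h1
    · exact htube hxε₂ t ⟨h.le, ht.2⟩
  -- build the connected set
  refine ⟨((fun t : ℝ => x + t • a) '' Set.Icc 0 z) ∪ segment ℝ (x + z • a) (ξ + z • a),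
    ?_, ?_, ?_, ?_⟩
  · apply IsPreconnected.union (x + z • a)
    · exact ⟨z, Set.mem_Icc.mpr ⟨hz.le, le_rfl⟩, rfl⟩
    · exact left_mem_segment ℝ _ _
    · exact (isPreconnected_Icc).image _
        (Continuous.continuousOn (continuous_const.add (continuous_id.smul continuous_const)))
    · exact (convex_segment _ _).isPreconnected
  · rintro y (⟨t, ht, rfl⟩ | hy)
    · show MvPolynomial.eval (x + t • a) f ≠ 0
      have h3 : x + t • a = fun j => x j + t * a j := by
        funext j; simp only [Pi.add_apply, Pi.smul_apply, smul_eq_mul]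
      rw [h3]
      exact (hT₁pos t ht).ne'
    · obtain ⟨u, v, hu, hv, huv, rfl⟩ := hy
      have hkey : u • (x + z • a) + v • (ξ + z • a) =
          fun j => (u • x + v • ξ) j + z * a j := by
        funext j
        simp only [Pi.add_apply, Pi.smul_apply, smul_eq_mul]
        linear_combination (z * a j) * huv
      rw [hkey]
      have hdist : dist (u • x + v • ξ) ξ < ε₂ := by
        have h4 : u • x + v • ξ - ξ = u • (x - ξ) := by
          funext j
          simp only [Pi.add_apply, Pi.sub_apply, Pi.smul_apply, smul_eq_mul]
          linear_combination (ξ j) * huv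
        rw [dist_eq_norm, h4, norm_smul]
        calc ‖u‖ * ‖x - ξ‖ ≤ 1 * ‖x - ξ‖ := by
              apply mul_le_mul_of_nonneg_right _ (norm_nonneg _)
              rw [Real.norm_eq_abs, abs_of_nonneg hu]; linarith
          _ = dist x ξ := by rw [one_mul, dist_eq_norm]
          _ < ε₂ := hxε₂
      exact (htube hdist z ⟨hηz, le_rfl⟩).ne'
  · refine Or.inl ⟨0, Set.mem_Icc.mpr ⟨le_rfl, hz.le⟩, ?_⟩
    show x + (0:ℝ) • a = x
    rw [zero_smul, add_zero]
  · refine Or.inr ?_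
    have h5 : (fun i => ξ i + z * a i) = ξ + z • a := by
      funext j; simp only [Pi.add_apply, Pi.smul_apply, smul_eq_mul]
    rw [h5]
    exact right_mem_segment ℝ _ _

/-- Under the smoothness assumption (S): if `C` is a connected component of
`S = {x | f(x) ≠ 0}`, `ξ ∈ closure C \ C`, `⟨∇f(ξ), a⟩ ≠ 0`, and `u ↦ f(ξ + u·a)` has no
root in `(-δ, δ)` other than `0`, then for every `0 < z < δ`, either `ξ + z·a ∈ C` or
`ξ - z·a ∈ C`. -/
theorem stmt6 (n : ℕ) (hn : 1 ≤ n) (f : MvPolynomial (Fin n) ℝ)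
    (hS : ∀ z : Fin n → ℂ,
      MvPolynomial.eval z (MvPolynomial.map (algebraMap ℝ ℂ) f) = 0 →
      ∃ i, MvPolynomial.eval z
        (MvPolynomial.map (algebraMap ℝ ℂ) (MvPolynomial.pderiv i f)) ≠ 0)
    (C : Set (Fin n → ℝ))
    (hC : ∃ x ∈ {x : Fin n → ℝ | MvPolynomial.eval x f ≠ 0},
      C = connectedComponentIn {x : Fin n → ℝ | MvPolynomial.eval x f ≠ 0} x)
    (ξ a : Fin n → ℝ) (hξ : ξ ∈ closure C \ C)
    (hgrad : ∑ i, MvPolynomial.eval ξ (MvPolynomial.pderiv i f) * a i ≠ 0)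
    (δ : ℝ) (hδ : 0 < δ)
    (hroots : ∀ u : ℝ, u ∈ Set.Ioo (-δ) δ → u ≠ 0 →
      MvPolynomial.eval (fun i => ξ i + u * a i) f ≠ 0) :
    ∀ z : ℝ, 0 < z → z < δ →
      (fun i => ξ i + z * a i) ∈ C ∨ (fun i => ξ i - z * a i) ∈ C := by
  intro z hz hzδ
  classical
  set S : Set (Fin n → ℝ) := {x | MvPolynomial.eval x f ≠ 0} with hSdef
  obtain ⟨x₀, hx₀, rfl⟩ := hC
  have hSopen : IsOpen S :=
    (isOpen_compl_singleton).preimage (MvPolynomial.continuous_eval f)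
  -- f vanishes at ξ
  have hFξ : MvPolynomial.eval ξ f = 0 := by
    by_contra h
    obtain ⟨r, hr, hball⟩ := Metric.isOpen_iff.mp hSopen ξ h
    obtain ⟨y, hyb, hyC⟩ := (_root_.mem_closure_iff.mp hξ.1) (Metric.ball ξ r)
      Metric.isOpen_ball (Metric.mem_ball_self hr)
    have h2 : Metric.ball ξ r ⊆ connectedComponentIn S y :=
      ((convex_ball ξ r).isPreconnected).subset_connectedComponentIn hyb hball
    rw [connectedComponentIn_eq hyC] at hξ
    exact hξ.2 (h2 (Metric.mem_ball_self hr))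
  set g : ℝ → ℝ := fun u => MvPolynomial.eval (fun i => ξ i + u * a i) f with hgdef
  set c : ℝ := ∑ i, MvPolynomial.eval ξ (MvPolynomial.pderiv i f) * a i with hcdef
  have hzero : (fun i => ξ i + (0:ℝ) * a i) = ξ := by funext i; ring
  have hg0 : g 0 = 0 := by
    show MvPolynomial.eval (fun i => ξ i + (0:ℝ) * a i) f = 0
    rw [hzero, hFξ]
  have hgc : Continuous g := (MvPolynomial.continuous_eval f).comp
    (continuous_pi fun i => continuous_const.add (continuous_id.mul continuous_const))
  have hg' : HasDerivAt g c 0 := by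
    have h := hasDerivAt_line n f ξ a 0
    rw [hzero] at h
    exact h
  have hcsq : (0:ℝ) < c * c := mul_self_pos.mpr hgrad
  -- slope sign near 0
  have hev : ∀ᶠ u in nhdsWithin 0 {(0:ℝ)}ᶜ, 0 < c * slope g 0 u := by
    have h1 := hasDerivAt_iff_tendsto_slope.mp hg'
    have h2 : ∀ᶠ v in nhds c, 0 < c * v :=
      (isOpen_lt continuous_const (continuous_const.mul continuous_id)).mem_nhds
        (by show 0 < c * c; exact hcsq)
    exact h1.eventually h2
  rw [eventually_nhdsWithin_iff] at hev
  obtain ⟨r₀, hr₀, hslopes⟩ := Metric.eventually_nhds_iff.mp hev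
  have hkey0 : ∀ u : ℝ, u ≠ 0 → |u| < r₀ → 0 < (c * g u) / u := by
    intro u hu hur
    have h3 := hslopes (by simpa [Real.dist_eq] using hur) (by simpa using hu)
    have h4 : slope g 0 u = g u / u := by
      rw [slope_def_field, hg0]; simp
    rw [h4, ← mul_div_assoc] at h3
    exact h3
  -- constant sign on (0, δ) and on (-δ, 0)
  have hposside : ∀ t : ℝ, 0 < t → t < δ → 0 < c * g t := by
    intro t ht htδ
    set u : ℝ := min (r₀ / 2) t with hu
    have hu0 : 0 < u := lt_min (by linarith) ht
    have hur : |u| < r₀ := by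
      rw [abs_of_pos hu0]
      exact lt_of_le_of_lt (min_le_left _ _) (by linarith)
    have h1 : 0 < c * g u := by
      have h2 := hkey0 u hu0.ne' hur
      rcases div_pos_iff.mp h2 with ⟨h3, _⟩ | ⟨_, h4⟩
      · exact h3
      · linarith
    have h5 : 0 < g u * g t := by
      apply same_sign g hgc u t (min_le_right _ _)
      intro w hw1 hw2
      exact hroots w ⟨by linarith, by linarith⟩ (lt_of_lt_of_le hu0 hw1).ne'
    nlinarith [h1, h5, sq_nonneg (g u)]
  have hnegside : ∀ t : ℝ, 0 < t → t < δ → c * g (-t) < 0 := by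
    intro t ht htδ
    set u : ℝ := -(min (r₀ / 2) t) with hu
    have humin : 0 < min (r₀ / 2) t := lt_min (by linarith) ht
    have hu0 : u < 0 := neg_lt_zero.mpr humin
    have hur : |u| < r₀ := by
      rw [abs_of_neg hu0, hu, neg_neg]
      exact lt_of_le_of_lt (min_le_left _ _) (by linarith)
    have h1 : c * g u < 0 := by
      have h2 := hkey0 u hu0.ne hur
      rcases div_pos_iff.mp h2 with ⟨_, h3⟩ | ⟨h4, _⟩
      · linarith
      · exact h4
    have h5 : 0 < g (-t) * g u := by
      apply same_sign g hgc (-t) u (neg_le_neg (min_le_right _ _))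
      intro w hw1 hw2
      have hw3 : w < 0 := lt_of_le_of_lt hw2 hu0
      exact hroots w ⟨by linarith, by linarith⟩ hw3.ne
    nlinarith [h1, h5, sq_nonneg (g u)]
  -- conclusion via the key lemma, split on the sign of c
  obtain ⟨y, hyC, hyd⟩ := Metric.mem_closure_iff.mp hξ.1 1 one_pos
  clear hyd
  rcases (Ne.lt_or_gt hgrad) with hcneg | hcpos
  · -- c < 0 : use (-f, a) for F < 0 (goes to ξ + z a), (f, -a) for F > 0 (goes to ξ - z a)
    obtain ⟨ε₁, hε₁, H₁⟩ := key n (-f) ξ a z hz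
      (by
        have h6 : ∑ i, MvPolynomial.eval ξ (MvPolynomial.pderiv i (-f)) * a i = -c := by
          rw [hcdef, ← Finset.sum_neg_distrib]
          exact Finset.sum_congr rfl fun i _ => by rw [map_neg, map_neg, neg_mul]
        rw [h6]; linarith)
      (by
        intro t ht htz
        rw [map_neg]
        have h7 := hposside t ht (lt_of_le_of_lt htz hzδ)
        show 0 < -(g t)
        nlinarith)
    obtain ⟨ε₂, hε₂, H₂⟩ := key n f ξ (-a) z hz
      (by
        have h6 : ∑ i, MvPolynomial.eval ξ (MvPolynomial.pderiv i f) * (-a) i = -c := by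
          rw [hcdef, ← Finset.sum_neg_distrib]
          exact Finset.sum_congr rfl fun i _ => by rw [Pi.neg_apply, mul_neg]
        rw [h6]; linarith)
      (by
        intro t ht htz
        have hfun : (fun i => ξ i + t * (-a) i) = (fun i => ξ i + (-t) * a i) := by
          funext i; rw [Pi.neg_apply]; ring
        rw [hfun]
        have h7 := hnegside t ht (lt_of_le_of_lt htz hzδ)
        show 0 < g (-t)
        nlinarith)
    obtain ⟨y, hyC, hyd⟩ := Metric.mem_closure_iff.mp hξ.1 (min ε₁ ε₂) (lt_min hε₁ hε₂)
    have hyd' : dist y ξ < min ε₁ ε₂ := by rw [dist_comm]; exact hyd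
    have hyS : MvPolynomial.eval y f ≠ 0 := connectedComponentIn_subset S x₀ hyC
    have hCeq := connectedComponentIn_eq hyC
    rcases hyS.lt_or_gt with hyneg | hypos
    · left
      obtain ⟨T, hT1, hT2, hT3, hT4⟩ := H₁ y (lt_of_lt_of_le hyd' (min_le_left _ _))
        (by rw [map_neg]; linarith)
      have hTS : T ⊆ S := by
        intro p hp
        have h8 := hT2 p hp
        rw [map_neg, ne_eq, neg_eq_zero] at h8
        exact h8
      rw [hCeq]
      exact (hT1.subset_connectedComponentIn hT3 hTS) hT4
    · right
      obtain ⟨T, hT1, hT2, hT3, hT4⟩ := H₂ y (lt_of_lt_of_le hyd' (min_le_right _ _)) hypos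
      rw [hCeq]
      apply (hT1.subset_connectedComponentIn hT3 hT2)
      have h9 : (fun i => ξ i - z * a i) = (fun i => ξ i + z * (-a) i) := by
        funext i; rw [Pi.neg_apply]; ring
      rw [h9]
      exact hT4
  · -- c > 0 : use (f, a) for F > 0 (goes to ξ + z a), (-f, -a) for F < 0 (goes to ξ - z a)
    obtain ⟨ε₁, hε₁, H₁⟩ := key n f ξ a z hz hcpos
      (by
        intro t ht htz
        have h7 := hposside t ht (lt_of_le_of_lt htz hzδ)
        show 0 < g t
        nlinarith)
    obtain ⟨ε₂, hε₂, H₂⟩ := key n (-f) ξ (-a) z hz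
      (by
        have h6 : ∑ i, MvPolynomial.eval ξ (MvPolynomial.pderiv i (-f)) * (-a) i = c := by
          rw [hcdef]
          exact Finset.sum_congr rfl fun i _ => by
            rw [map_neg, map_neg, Pi.neg_apply, neg_mul_neg]
        rw [h6]; exact hcpos)
      (by
        intro t ht htz
        have hfun : (fun i => ξ i + t * (-a) i) = (fun i => ξ i + (-t) * a i) := by
          funext i; rw [Pi.neg_apply]; ring
        rw [hfun, map_neg]
        have h7 := hnegside t ht (lt_of_le_of_lt htz hzδ)
        show 0 < -(g (-t))
        nlinarith)
    obtain ⟨y, hyC, hyd⟩ := Metric.mem_closure_iff.mp hξ.1 (min ε₁ ε₂) (lt_min hε₁ hε₂)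
    have hyd' : dist y ξ < min ε₁ ε₂ := by rw [dist_comm]; exact hyd
    have hyS : MvPolynomial.eval y f ≠ 0 := connectedComponentIn_subset S x₀ hyC
    have hCeq := connectedComponentIn_eq hyC
    rcases hyS.lt_or_gt with hyneg | hypos
    · right
      obtain ⟨T, hT1, hT2, hT3, hT4⟩ := H₂ y (lt_of_lt_of_le hyd' (min_le_right _ _))
        (by rw [map_neg]; linarith)
      have hTS : T ⊆ S := by
        intro p hp
        have h8 := hT2 p hp
        rw [map_neg, ne_eq, neg_eq_zero] at h8
        exact h8
      rw [hCeq]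
      apply (hT1.subset_connectedComponentIn hT3 hTS)
      have h9 : (fun i => ξ i - z * a i) = (fun i => ξ i + z * (-a) i) := by
        funext i; rw [Pi.neg_apply]; ring
      rw [h9]
      exact hT4
    · left
      obtain ⟨T, hT1, hT2, hT3, hT4⟩ := H₁ y (lt_of_lt_of_le hyd' (min_le_left _ _)) hypos
      rw [hCeq]
      exact (hT1.subset_connectedComponentIn hT3 hT2) hT4
end

section
/- Let n ≥ 1 and let f be a polynomial in n variables with real coefficients satisfying the smoothness assumption (S). Let Q be a nonempty finite subset of Z(f) = {x ∈ ℝⁿ : f(x) = 0}, and let a ∈ ℝⁿ be such that ⟨∇f(q), a⟩ ≠ 0 for every q ∈ Q. Let λ > 0 be such that for every q ∈ Q the univariate polynomial u ↦ f(q + u·a) has no root in the interval [−λ, λ] other than 0. Define P = {q + λ·a : q ∈ Q} ∪ {q − λ·a : q ∈ Q}. Then f does not vanish at any point of P, and every connected component C of S = {x ∈ ℝⁿ : f(x) ≠ 0} whose closure contains a point of Q contains a point of P. -/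
open MvPolynomial Set

lemma hasDerivAt_eval_line {n : ℕ} (f : MvPolynomial (Fin n) ℝ) (x a : Fin n → ℝ) (u : ℝ) :
    HasDerivAt (fun t : ℝ => MvPolynomial.eval (fun i => x i + t * a i) f)
      (∑ i, MvPolynomial.eval (fun i => x i + u * a i) (MvPolynomial.pderiv i f) * a i) u := by
  induction f using MvPolynomial.induction_on with
  | C c =>
      simp only [eval_C, pderiv_C, map_zero, zero_mul, Finset.sum_const_zero]
      exact hasDerivAt_const _ _
  | add p q hp hq =>
      simp only [map_add, add_mul, Finset.sum_add_distrib]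
      exact hp.add hq
  | mul_X p i hp =>
      have haff : HasDerivAt (fun t : ℝ => x i + t * a i) (a i) u := by
        simpa using ((hasDerivAt_id u).mul_const (a i)).const_add (x i)
      have H : HasDerivAt (fun t : ℝ => MvPolynomial.eval (fun j => x j + t * a j) p * (x i + t * a i)) _ u := hp.mul haff
      simp only [map_mul, eval_X] at H ⊢
      convert H using 1
      simp only [Derivation.leibniz, pderiv_X, smul_eq_mul, map_add, map_mul, eval_X,
        Pi.single_apply, apply_ite (MvPolynomial.eval _), map_one, map_zero,
        mul_ite, mul_one, mul_zero, ite_mul, zero_mul, add_mul,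
        Finset.sum_add_distrib, Finset.sum_ite_eq, Finset.mem_univ, if_true, Finset.sum_mul]
      rw [add_comm]
      congr 1
      rw [← Finset.sum_add_distrib]
      exact Finset.sum_congr rfl (fun j _ => by ring)

lemma reach_aux {n : ℕ} (f : MvPolynomial (Fin n) ℝ) (x q b : Fin n → ℝ) (lam : ℝ)
    (hlam0 : 0 ≤ lam)
    (hline : ∀ u ∈ Set.Icc (0:ℝ) lam, MvPolynomial.eval (fun i => x i + u * b i) f ≠ 0)
    (hseg : ∀ t ∈ Set.Icc (0:ℝ) 1,
      MvPolynomial.eval (fun i => (x i + t * (q i - x i)) + lam * b i) f ≠ 0) :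
    (fun i => q i + lam * b i) ∈
      connectedComponentIn {y : Fin n → ℝ | MvPolynomial.eval y f ≠ 0} x := by
  set S := {y : Fin n → ℝ | MvPolynomial.eval y f ≠ 0} with hSdef
  set φ : ℝ → (Fin n → ℝ) := fun u => fun i => x i + u * b i with hφ
  set ψ : ℝ → (Fin n → ℝ) := fun t => fun i => (x i + t * (q i - x i)) + lam * b i with hψ
  have hφc : Continuous φ := continuous_pi fun i =>
    continuous_const.add (continuous_id.mul continuous_const)
  have hψc : Continuous ψ := continuous_pi fun i =>
    (continuous_const.add (continuous_id.mul continuous_const)).add continuous_const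
  set A := φ '' Set.Icc (0:ℝ) lam with hA
  set B := ψ '' Set.Icc (0:ℝ) 1 with hB
  have hApc : IsPreconnected A := isPreconnected_Icc.image _ hφc.continuousOn
  have hBpc : IsPreconnected B := isPreconnected_Icc.image _ hψc.continuousOn
  have hAS : A ⊆ S := by rintro _ ⟨u, hu, rfl⟩; exact hline u hu
  have hBS : B ⊆ S := by rintro _ ⟨t, ht, rfl⟩; exact hseg t ht
  have hmid : φ lam = ψ 0 := by funext i; simp [hφ, hψ]
  have hφlamA : φ lam ∈ A := ⟨lam, ⟨hlam0, le_refl _⟩, rfl⟩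
  have hφlamB : φ lam ∈ B := ⟨0, ⟨le_refl _, zero_le_one⟩, hmid.symm⟩
  have hU : IsPreconnected (A ∪ B) :=
    IsPreconnected.union (φ lam) hφlamA hφlamB hApc hBpc
  have hxA : x ∈ A := ⟨0, ⟨le_refl _, hlam0⟩, by funext i; simp [hφ]⟩
  have hsub : A ∪ B ⊆ connectedComponentIn S x :=
    hU.subset_connectedComponentIn (Or.inl hxA) (union_subset hAS hBS)
  have htarget : (fun i => q i + lam * b i) = ψ 1 := by
    funext i; simp only [hψ]; ring
  rw [htarget]
  exact hsub (Or.inr ⟨1, ⟨zero_le_one, le_refl _⟩, rfl⟩)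

/-- Under the smoothness assumption (S): if `Q` is a nonempty finite subset of `Z(f)`,
`a` is transverse to `∇f` at every point of `Q`, and `λ > 0` is such that for every
`q ∈ Q` the polynomial `u ↦ f(q + u·a)` has no root in `[-λ, λ]` other than `0`, then
`f` does not vanish on `P = {q ± λ·a : q ∈ Q}`, and every connected component of
`S = {x | f(x) ≠ 0}` whose closure contains a point of `Q` contains a point of `P`. -/
theorem stmt7 (n : ℕ) (hn : 1 ≤ n) (f : MvPolynomial (Fin n) ℝ)
    (hS : ∀ z : Fin n → ℂ,
      MvPolynomial.eval z (MvPolynomial.map (algebraMap ℝ ℂ) f) = 0 →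
      ∃ i, MvPolynomial.eval z
        (MvPolynomial.map (algebraMap ℝ ℂ) (MvPolynomial.pderiv i f)) ≠ 0)
    (Q : Set (Fin n → ℝ)) (hQne : Q.Nonempty) (hQfin : Q.Finite)
    (hQZ : ∀ q ∈ Q, MvPolynomial.eval q f = 0)
    (a : Fin n → ℝ)
    (ha : ∀ q ∈ Q, ∑ i, MvPolynomial.eval q (MvPolynomial.pderiv i f) * a i ≠ 0)
    (lam : ℝ) (hlam : 0 < lam)
    (hroots : ∀ q ∈ Q, ∀ u : ℝ, u ∈ Set.Icc (-lam) lam → u ≠ 0 →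
      MvPolynomial.eval (fun i => q i + u * a i) f ≠ 0) :
    (∀ p ∈ ((fun q : Fin n → ℝ => fun i => q i + lam * a i) '' Q ∪
            (fun q : Fin n → ℝ => fun i => q i - lam * a i) '' Q),
        MvPolynomial.eval p f ≠ 0) ∧
    (∀ C : Set (Fin n → ℝ),
      (∃ x ∈ {x : Fin n → ℝ | MvPolynomial.eval x f ≠ 0},
        C = connectedComponentIn {x : Fin n → ℝ | MvPolynomial.eval x f ≠ 0} x) →
      (∃ q ∈ Q, q ∈ closure C) →
      (C ∩ ((fun q : Fin n → ℝ => fun i => q i + lam * a i) '' Q ∪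
            (fun q : Fin n → ℝ => fun i => q i - lam * a i) '' Q)).Nonempty) := by
  constructor
  · rintro p (⟨q, hq, rfl⟩ | ⟨q, hq, rfl⟩)
    · exact hroots q hq lam ⟨by linarith, le_refl _⟩ hlam.ne'
    · have h := hroots q hq (-lam) ⟨le_refl _, by linarith⟩ (by simpa using hlam.ne')
      have heq : (fun i => q i - lam * a i) = (fun i => q i + (-lam) * a i) := by
        funext i; ring
      show MvPolynomial.eval (fun i => q i - lam * a i) f ≠ 0
      rw [heq]; exact h
  · rintro C ⟨x₀, hx₀, hC⟩ ⟨q, hqQ, hqcl⟩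
    have hD0 : (∑ i, MvPolynomial.eval q (MvPolynomial.pderiv i f) * a i) ≠ 0 := ha q hqQ
    have hψmc : Continuous (fun p : (Fin n → ℝ) × ℝ => fun j : Fin n => p.1 j + p.2 * a j) :=
      continuous_pi fun j =>
        ((continuous_apply j).comp continuous_fst).add (continuous_snd.mul continuous_const)
    have hGc : Continuous (fun p : (Fin n → ℝ) × ℝ =>
        ∑ i, MvPolynomial.eval (fun j => p.1 j + p.2 * a j) (MvPolynomial.pderiv i f) * a i) :=
      continuous_finset_sum _ fun i _ =>
        ((MvPolynomial.continuous_eval _).comp hψmc).mul continuous_const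
    obtain ⟨δ₁, hδ₁, hδ₁p⟩ := Metric.continuousAt_iff.mp (hGc.continuousAt (x := (q, 0)))
      |∑ i, MvPolynomial.eval q (MvPolynomial.pderiv i f) * a i| (abs_pos.mpr hD0)
    set ε := min (δ₁ / 2) lam with hεdef
    have hε : 0 < ε := lt_min (by linarith) hlam
    have hεlam : ε ≤ lam := min_le_right _ _
    have hεδ : ε ≤ δ₁ / 2 := min_le_left _ _
    have hK₀c : IsCompact (Set.Icc (-lam) (-ε) ∪ Set.Icc ε lam) :=
      isCompact_Icc.union isCompact_Icc
    have hNo : IsOpen {p : (Fin n → ℝ) × ℝ |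
        MvPolynomial.eval (fun j => p.1 j + p.2 * a j) f ≠ 0} :=
      isOpen_ne.preimage ((MvPolynomial.continuous_eval _).comp hψmc)
    have hQK : {q} ×ˢ (Set.Icc (-lam) (-ε) ∪ Set.Icc ε lam) ⊆
        {p : (Fin n → ℝ) × ℝ | MvPolynomial.eval (fun j => p.1 j + p.2 * a j) f ≠ 0} := by
      rintro ⟨y, u⟩ ⟨hy, hu⟩
      simp only [mem_singleton_iff] at hy
      show MvPolynomial.eval (fun j => y j + u * a j) f ≠ 0
      rw [hy]
      rcases hu with h | h
      · exact hroots q hqQ u ⟨h.1, by linarith [h.2, hε]⟩ (by linarith [h.2, hε] : u < 0).ne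
      · exact hroots q hqQ u ⟨by linarith [h.1, hε], h.2⟩ (by linarith [h.1, hε] : 0 < u).ne'
    obtain ⟨U, V, hUo, hVo, hqU, hKV, hUVN⟩ :=
      generalized_tube_lemma isCompact_singleton hK₀c hNo hQK
    obtain ⟨δ₂, hδ₂, hballU⟩ := Metric.isOpen_iff.mp hUo q (hqU rfl)
    set δ := min δ₂ (δ₁ / 2) with hδdef
    have hδ : 0 < δ := lt_min hδ₂ (by linarith)
    obtain ⟨x, hxC, hdqx⟩ := Metric.mem_closure_iff.mp hqcl δ hδ
    have hdxq : dist x q < δ := by rwa [dist_comm] at hdqx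
    have hCS : C ⊆ {x : Fin n → ℝ | MvPolynomial.eval x f ≠ 0} :=
      hC ▸ connectedComponentIn_subset _ _
    have hxS : MvPolynomial.eval x f ≠ 0 := hCS hxC
    have hCx : C = connectedComponentIn {x : Fin n → ℝ | MvPolynomial.eval x f ≠ 0} x := by
      rw [hC]; exact connectedComponentIn_eq (hC ▸ hxC)
    -- (i): sign control on |u| ≤ ε
    have hDx : ∀ u : ℝ, |u| ≤ ε →
        |(∑ i, MvPolynomial.eval (fun j => x j + u * a j) (MvPolynomial.pderiv i f) * a i) -
            ∑ i, MvPolynomial.eval q (MvPolynomial.pderiv i f) * a i| <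
          |∑ i, MvPolynomial.eval q (MvPolynomial.pderiv i f) * a i| := by
      intro u hu
      have hd : dist ((x, u)) ((q, 0)) < δ₁ := by
        rw [Prod.dist_eq]
        apply max_lt
        · calc dist x q < δ := hdxq
            _ ≤ δ₁ / 2 := min_le_right _ _
            _ < δ₁ := by linarith
        · rw [Real.dist_eq, sub_zero]
          calc |u| ≤ ε := hu
            _ ≤ δ₁ / 2 := hεδ
            _ < δ₁ := by linarith
      simpa only [Real.dist_eq, zero_mul, add_zero] using hδ₁p hd
    -- (ii): nonvanishing in the tube
    have hK : ∀ y : Fin n → ℝ, dist y q < δ₂ →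
        ∀ u ∈ Set.Icc (-lam) (-ε) ∪ Set.Icc ε lam,
        MvPolynomial.eval (fun j => y j + u * a j) f ≠ 0 := by
      intro y hy u hu
      have h1 : (y, u) ∈ U ×ˢ V := ⟨hballU (Metric.mem_ball.mpr hy), hKV hu⟩
      have h2 := hUVN h1
      exact h2
    have hgc : Continuous (fun u : ℝ => MvPolynomial.eval (fun j => x j + u * a j) f) :=
      (MvPolynomial.continuous_eval _).comp
        (continuous_pi fun j => continuous_const.add (continuous_id.mul continuous_const))
    have hg0ne : MvPolynomial.eval (fun j => x j + (0:ℝ) * a j) f ≠ 0 := by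
      simpa only [zero_mul, add_zero] using hxS
    have h0mem : (0 : ℝ) ∈ Set.Icc (-ε) ε := ⟨by linarith, hε.le⟩
    have key : (∀ u ∈ Set.Icc (0:ℝ) ε, MvPolynomial.eval (fun j => x j + u * a j) f ≠ 0) ∨
        (∀ u ∈ Set.Icc (-ε) (0:ℝ), MvPolynomial.eval (fun j => x j + u * a j) f ≠ 0) := by
      rcases hD0.lt_or_gt with hneg | hpos
      · have hder : ∀ u ∈ interior (Set.Icc (-ε) ε),
            deriv (fun u : ℝ => MvPolynomial.eval (fun j => x j + u * a j) f) u < 0 := by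
          intro u hu
          rw [interior_Icc] at hu
          rw [(hasDerivAt_eval_line f x a u).deriv]
          have h1 := hDx u (abs_le.mpr ⟨hu.1.le, hu.2.le⟩)
          rw [abs_of_neg hneg, abs_sub_lt_iff] at h1
          linarith [h1.1]
        have hanti := strictAntiOn_of_deriv_neg (convex_Icc (-ε) ε) hgc.continuousOn hder
        rcases hg0ne.lt_or_gt with hgneg | hgpos
        · left
          intro u hu
          rcases eq_or_lt_of_le hu.1 with h0 | h0
          · rw [← h0]; exact hg0ne
          · have := hanti h0mem ⟨by linarith [hu.1], hu.2⟩ h0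
            exact (by linarith :
              MvPolynomial.eval (fun j => x j + u * a j) f < 0).ne
        · right
          intro u hu
          rcases eq_or_lt_of_le hu.2 with h0 | h0
          · rw [h0]; exact hg0ne
          · have := hanti ⟨hu.1, by linarith⟩ h0mem h0
            exact (by linarith :
              0 < MvPolynomial.eval (fun j => x j + u * a j) f).ne'
      · have hder : ∀ u ∈ interior (Set.Icc (-ε) ε),
            0 < deriv (fun u : ℝ => MvPolynomial.eval (fun j => x j + u * a j) f) u := by
          intro u hu
          rw [interior_Icc] at hu
          rw [(hasDerivAt_eval_line f x a u).deriv]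
          have h1 := hDx u (abs_le.mpr ⟨hu.1.le, hu.2.le⟩)
          rw [abs_of_pos hpos, abs_sub_lt_iff] at h1
          linarith [h1.2]
        have hmono := strictMonoOn_of_deriv_pos (convex_Icc (-ε) ε) hgc.continuousOn hder
        rcases hg0ne.lt_or_gt with hgneg | hgpos
        · right
          intro u hu
          rcases eq_or_lt_of_le hu.2 with h0 | h0
          · rw [h0]; exact hg0ne
          · have := hmono ⟨hu.1, by linarith⟩ h0mem h0
            exact (by linarith :
              MvPolynomial.eval (fun j => x j + u * a j) f < 0).ne
        · left
          intro u hu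
          rcases eq_or_lt_of_le hu.1 with h0 | h0
          · rw [← h0]; exact hg0ne
          · have := hmono h0mem ⟨by linarith [hu.1], hu.2⟩ h0
            exact (by linarith :
              0 < MvPolynomial.eval (fun j => x j + u * a j) f).ne'
    have hdxq2 : dist x q < δ₂ := lt_of_lt_of_le hdxq (min_le_left _ _)
    have hy2 : ∀ t ∈ Set.Icc (0:ℝ) 1, dist (fun j => x j + t * (q j - x j)) q < δ₂ := by
      intro t ht
      rw [dist_eq_norm]
      have heq : (fun j => x j + t * (q j - x j)) - q = (1 - t) • (x - q) := by
        funext j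
        simp only [Pi.sub_apply, Pi.smul_apply, smul_eq_mul]
        ring
      rw [heq, norm_smul]
      calc ‖(1 - t)‖ * ‖x - q‖ ≤ 1 * ‖x - q‖ := by
            apply mul_le_mul_of_nonneg_right _ (norm_nonneg _)
            rw [Real.norm_eq_abs, abs_le]
            constructor <;> linarith [ht.1, ht.2]
        _ = ‖x - q‖ := one_mul _
        _ = dist x q := (dist_eq_norm x q).symm
        _ < δ₂ := hdxq2
    rcases key with hright | hleft
    · -- move in direction +a
      have hlineR : ∀ u ∈ Set.Icc (0:ℝ) lam,
          MvPolynomial.eval (fun j => x j + u * a j) f ≠ 0 := by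
        intro u hu
        rcases le_total u ε with h | h
        · exact hright u ⟨hu.1, h⟩
        · exact hK x hdxq2 u (Or.inr ⟨h, hu.2⟩)
      have hsegR : ∀ t ∈ Set.Icc (0:ℝ) 1,
          MvPolynomial.eval (fun j => (x j + t * (q j - x j)) + lam * a j) f ≠ 0 := by
        intro t ht
        exact hK _ (hy2 t ht) lam (Or.inr ⟨hεlam, le_refl _⟩)
      have hr := reach_aux f x q a lam hlam.le hlineR hsegR
      exact ⟨_, by rw [hCx]; exact hr, Or.inl ⟨q, hqQ, rfl⟩⟩
    · -- move in direction -a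
      have hlineL : ∀ u ∈ Set.Icc (0:ℝ) lam,
          MvPolynomial.eval (fun j => x j + u * (-(a j))) f ≠ 0 := by
        intro u hu
        have heq : (fun j => x j + u * (-(a j))) = (fun j => x j + (-u) * a j) := by
          funext j; ring
        rw [heq]
        rcases le_total u ε with h | h
        · exact hleft (-u) ⟨by linarith, by linarith [hu.1]⟩
        · exact hK x hdxq2 (-u) (Or.inl ⟨by linarith [hu.2], by linarith⟩)
      have hsegL : ∀ t ∈ Set.Icc (0:ℝ) 1,
          MvPolynomial.eval (fun j => (x j + t * (q j - x j)) + lam * (-(a j))) f ≠ 0 := by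
        intro t ht
        have heq : (fun j => (x j + t * (q j - x j)) + lam * (-(a j)))
            = (fun j => (x j + t * (q j - x j)) + (-lam) * a j) := by
          funext j; ring
        rw [heq]
        exact hK _ (hy2 t ht) (-lam) (Or.inl ⟨le_refl _, by linarith⟩)
      have hr := reach_aux f x q (fun j => -(a j)) lam hlam.le hlineL hsegL
      have heq2 : (fun j => q j + lam * (-(a j))) = (fun j : Fin n => q j - lam * a j) := by
        funext j; ring
      refine ⟨(fun j : Fin n => q j - lam * a j), ?_, Or.inr ⟨q, hqQ, rfl⟩⟩
      rw [hCx, ← heq2]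
      exact hr
end

section
/- Let n ≥ 1 and let f be a polynomial in n variables with rational coefficients, of degree d ≥ 1, evaluated on ℝⁿ. Let Q ⊂ ℝⁿ be nonempty and finite with f(q) ≠ 0 for all q ∈ Q. Let c = ‖f‖∞ be the maximum of the absolute values of the coefficients of f, let M be a real number with M ≥ max_{q∈Q} ‖q‖∞ + 1, let m be a real number with 0 < m ≤ min_{q∈Q} |f(q)|, and set 𝒹 = min{1, m / (C(n+d,d)² · M^d · c)}, where C(n+d,d) is the binomial coefficient. Then for every q ∈ Q and every p ∈ ℝⁿ with ‖p − q‖∞ ≤ 𝒹, one has f(p) ≠ 0. -/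
open Finset

lemma aux_pow (M δ x y : ℝ) (hM : 1 ≤ M) (hx : |x| ≤ M) (hy : |y| ≤ M)
    (hδ : |x - y| ≤ δ) : ∀ e : ℕ, |x ^ e - y ^ e| ≤ e * M ^ e * δ
  | 0 => by simp
  | (e + 1) => by
    have hM0 : (0:ℝ) ≤ M := le_trans zero_le_one hM
    have hδ0 : (0:ℝ) ≤ δ := le_trans (abs_nonneg _) hδ
    have ih := aux_pow M δ x y hM hx hy hδ e
    have key : x ^ (e+1) - y ^ (e+1) = x * (x ^ e - y ^ e) + (x - y) * y ^ e := by ring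
    have h1 : |x ^ (e+1) - y ^ (e+1)| ≤ |x| * |x ^ e - y ^ e| + |x - y| * |y ^ e| := by
      rw [key]; exact (abs_add_le _ _).trans (by rw [abs_mul, abs_mul])
    have h2 : |y ^ e| ≤ M ^ (e+1) := by
      rw [abs_pow]
      exact le_trans (pow_le_pow_left₀ (abs_nonneg _) hy e)
        (pow_le_pow_right₀ hM (Nat.le_succ e))
    have h3 : |x| * |x ^ e - y ^ e| + |x - y| * |y ^ e|
        ≤ M * (e * M ^ e * δ) + δ * M ^ (e+1) := by
      gcongr <;> first | exact abs_nonneg _ | exact hx | exact ih | exact hδ | exact h2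

    refine (h1.trans h3).trans (le_of_eq ?_)
    push_cast; ring

lemma aux_prod {n : ℕ} (M δ : ℝ) (hM : 1 ≤ M) (hδ : 0 ≤ δ)
    (p q : Fin n → ℝ) (hp : ∀ i, |p i| ≤ M) (hq : ∀ i, |q i| ≤ M)
    (hpq : ∀ i, |p i - q i| ≤ δ) (a : Fin n → ℕ) (s : Finset (Fin n)) :
    |∏ i ∈ s, p i ^ a i - ∏ i ∈ s, q i ^ a i|
      ≤ (∑ i ∈ s, a i) * M ^ (∑ i ∈ s, a i) * δ := by
  have hM0 : (0:ℝ) ≤ M := le_trans zero_le_one hM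
  induction s using Finset.induction_on with
  | empty => simp
  | @insert i s hi ih =>
    rw [Finset.prod_insert hi, Finset.prod_insert hi, Finset.sum_insert hi]
    have key : p i ^ a i * ∏ j ∈ s, p j ^ a j - q i ^ a i * ∏ j ∈ s, q j ^ a j
        = p i ^ a i * (∏ j ∈ s, p j ^ a j - ∏ j ∈ s, q j ^ a j)
          + (p i ^ a i - q i ^ a i) * ∏ j ∈ s, q j ^ a j := by ring
    have hA : |p i ^ a i| ≤ M ^ a i := by
      rw [abs_pow]; exact pow_le_pow_left₀ (abs_nonneg _) (hp i) _
    have hB : |∏ j ∈ s, q j ^ a j| ≤ M ^ (∑ j ∈ s, a j) := by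
      rw [abs_prod, ← Finset.prod_pow_eq_pow_sum]
      exact Finset.prod_le_prod (fun j _ => abs_nonneg _)
        (fun j _ => by rw [abs_pow]; exact pow_le_pow_left₀ (abs_nonneg _) (hq j) _)
    have haux := aux_pow M δ (p i) (q i) hM (hp i) (hq i) (hpq i) (a i)
    calc |p i ^ a i * ∏ j ∈ s, p j ^ a j - q i ^ a i * ∏ j ∈ s, q j ^ a j|
        ≤ |p i ^ a i| * |∏ j ∈ s, p j ^ a j - ∏ j ∈ s, q j ^ a j|
          + |p i ^ a i - q i ^ a i| * |∏ j ∈ s, q j ^ a j| := by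
          rw [key]; exact (abs_add_le _ _).trans (by rw [abs_mul, abs_mul])
      _ ≤ M ^ a i * ((∑ j ∈ s, a j) * M ^ (∑ j ∈ s, a j) * δ)
          + (a i * M ^ a i * δ) * M ^ (∑ j ∈ s, a j) := by
          gcongr <;> first | exact abs_nonneg _ | exact ih | exact haux | exact hA | exact hB
      _ = (↑(a i + ∑ j ∈ s, a j)) * M ^ (a i + ∑ j ∈ s, a j) * δ := by
          rw [pow_add]; push_cast; ring

lemma aux_card (n d : ℕ) (f : MvPolynomial (Fin n) ℚ) (hdeg : f.totalDegree ≤ d) :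
    f.support.card ≤ (n + d).choose d := by
  classical
  have hsum : ∀ mo ∈ f.support, Multiset.card mo.toMultiset ≤ d := by
    intro mo hmo
    rw [Finsupp.card_toMultiset]
    exact le_trans (MvPolynomial.le_totalDegree hmo) hdeg
  let F : {mo // mo ∈ f.support} → Sym (Fin (n+1)) d := fun mo =>
    ⟨Multiset.map Fin.castSucc mo.1.toMultiset
      + Multiset.replicate (d - Multiset.card mo.1.toMultiset) (Fin.last n), by
      simp only [Multiset.card_add, Multiset.card_map, Multiset.card_replicate]
      have := hsum mo.1 mo.2
      omega⟩
  have hinj : Function.Injective F := by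
    intro a b hab
    have hmult := congrArg Subtype.val hab
    simp only [F] at hmult
    ext1
    apply Finsupp.ext
    intro i
    have hcount := congrArg (Multiset.count (Fin.castSucc i)) hmult
    simp only [F, Multiset.count_add, Multiset.count_replicate,
      Multiset.count_map_eq_count' _ _ (Fin.castSucc_injective n),
      Finsupp.count_toMultiset] at hcount
    have hne : (Fin.castSucc i : Fin (n+1)) ≠ Fin.last n := (Fin.castSucc_lt_last i).ne
    simpa [hne.symm] using hcount
  calc f.support.card = Fintype.card {mo // mo ∈ f.support} := (Fintype.card_coe _).symm
    _ ≤ Fintype.card (Sym (Fin (n+1)) d) := Fintype.card_le_of_injective F hinj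
    _ = (n + d).choose d := by
        rw [Sym.card_sym_eq_choose, Fintype.card_fin]
        congr 1
        omega
/-- Lemma `boxf`: with `c = ‖f‖∞`, `M ≥ max_{q∈Q} ‖q‖∞ + 1`, `0 < m ≤ min_{q∈Q} |f(q)|`
and `𝒹 = min 1 (m / (C(n+d,d)² M^d c))`, the polynomial `f` does not vanish on the closed
`𝒹`-box (for the sup norm) around any point of `Q`. -/
theorem stmt8 (n d : ℕ) (hn : 1 ≤ n) (f : MvPolynomial (Fin n) ℚ)
    (hdeg : f.totalDegree = d) (hd1 : 1 ≤ d)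
    (Q : Set (Fin n → ℝ)) (hQne : Q.Nonempty) (hQfin : Q.Finite)
    (hQ : ∀ q ∈ Q, MvPolynomial.eval q (MvPolynomial.map (algebraMap ℚ ℝ) f) ≠ 0)
    (c : ℝ)
    (hc1 : ∀ mo : Fin n →₀ ℕ, |((f.coeff mo : ℚ) : ℝ)| ≤ c)
    (hc2 : ∃ mo : Fin n →₀ ℕ, |((f.coeff mo : ℚ) : ℝ)| = c)
    (M : ℝ) (hM : ∀ q ∈ Q, ∀ i, |q i| + 1 ≤ M)
    (m : ℝ) (hm : 0 < m)
    (hm2 : ∀ q ∈ Q, m ≤ |MvPolynomial.eval q (MvPolynomial.map (algebraMap ℚ ℝ) f)|) :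
    ∀ q ∈ Q, ∀ p : Fin n → ℝ,
      (∀ i, |p i - q i| ≤ min 1 (m / (((n + d).choose d : ℝ) ^ 2 * M ^ d * c))) →
      MvPolynomial.eval p (MvPolynomial.map (algebraMap ℚ ℝ) f) ≠ 0 := by
  intro q hq p hp
  set g := MvPolynomial.map (algebraMap ℚ ℝ) f with hg
  set C : ℝ := ((n + d).choose d : ℝ) with hCdef
  set K : ℝ := C ^ 2 * M ^ d * c with hKdef
  set δ : ℝ := min 1 (m / K) with hδdef
  -- basic positivity facts
  have i₀ : Fin n := ⟨0, hn⟩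
  have hM1 : 1 ≤ M := le_trans (by have := abs_nonneg (q i₀); linarith) (hM q hq i₀)
  have hM0 : (0:ℝ) < M := lt_of_lt_of_le one_pos hM1
  have hfne : f ≠ 0 := by
    intro h
    rw [h, MvPolynomial.totalDegree_zero] at hdeg
    omega
  have hcpos : 0 < c := by
    obtain ⟨mo, hmo⟩ := MvPolynomial.ne_zero_iff.1 hfne
    exact lt_of_lt_of_le (abs_pos.2 (by exact_mod_cast hmo)) (hc1 mo)
  have hC1 : (d : ℝ) + 1 ≤ C := by
    rw [hCdef]
    have h1 : (d + 1).choose d ≤ (n + d).choose d := Nat.choose_le_choose d (by omega)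
    have h2 : (d + 1).choose d = d + 1 := Nat.choose_succ_self_right d
    exact_mod_cast h2 ▸ h1
  have hCpos : 0 < C := by have : (0:ℝ) ≤ d := Nat.cast_nonneg d; linarith
  have hKpos : 0 < K := by
    rw [hKdef]; positivity
  have hδpos : 0 < δ := lt_min one_pos (div_pos hm hKpos)
  have hδ1 : δ ≤ 1 := min_le_left _ _
  have hδ2 : δ ≤ m / K := min_le_right _ _
  -- point bounds
  have hqM : ∀ i, |q i| ≤ M := fun i => by have := hM q hq i; linarith
  have hpM : ∀ i, |p i| ≤ M := by
    intro i
    have h1 : |p i| ≤ |q i| + |p i - q i| := by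
      calc |p i| = |q i + (p i - q i)| := by ring_nf
        _ ≤ |q i| + |p i - q i| := abs_add_le _ _
    have := hM q hq i
    have := (hp i).trans hδ1
    linarith
  -- expansion of eval
  have hev : ∀ x : Fin n → ℝ,
      MvPolynomial.eval x g = ∑ mo ∈ g.support, g.coeff mo * ∏ i, x i ^ mo i :=
    fun x => MvPolynomial.eval_eq' x g
  have hdiff : MvPolynomial.eval p g - MvPolynomial.eval q g
      = ∑ mo ∈ g.support, g.coeff mo * ((∏ i, p i ^ mo i) - ∏ i, q i ^ mo i) := by
    rw [hev p, hev q, ← Finset.sum_sub_distrib]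
    exact Finset.sum_congr rfl fun mo _ => (mul_sub _ _ _).symm
  -- term bound
  have hterm : ∀ mo ∈ g.support,
      |g.coeff mo * ((∏ i, p i ^ mo i) - ∏ i, q i ^ mo i)| ≤ c * (d * M ^ d * δ) := by
    intro mo hmo
    have hmof : mo ∈ f.support := MvPolynomial.support_map_subset _ _ hmo
    have hsum : (∑ i, mo i) ≤ d := by
      have h1 : (mo.sum fun _ e => e) ≤ f.totalDegree := MvPolynomial.le_totalDegree hmof
      rw [hdeg] at h1
      refine le_trans (le_of_eq ?_) h1
      rw [Finsupp.sum_fintype _ _ (fun _ => rfl)]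
    have hcoeff : g.coeff mo = ((f.coeff mo : ℚ) : ℝ) := MvPolynomial.coeff_map _ _ _
    have hprod := aux_prod M δ hM1 (le_of_lt hδpos) p q hpM hqM hp (fun i => mo i)
      Finset.univ
    have hmono : ((∑ i, mo i : ℕ) : ℝ) * M ^ (∑ i, mo i) * δ ≤ (d:ℝ) * M ^ d * δ := by
      gcongr <;> first | exact hM1 | exact hsum | exact_mod_cast hsum
    rw [abs_mul, hcoeff]
    calc |((f.coeff mo : ℚ) : ℝ)| * |(∏ i, p i ^ mo i) - ∏ i, q i ^ mo i|
        ≤ c * ((d:ℝ) * M ^ d * δ) := by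
          apply mul_le_mul (hc1 mo) (hprod.trans hmono) (abs_nonneg _) (le_of_lt hcpos)
      _ = c * (d * M ^ d * δ) := rfl
  -- sum bound
  have hcard : (g.support.card : ℝ) ≤ C := by
    rw [hCdef]
    have h1 : g.support.card ≤ f.support.card :=
      Finset.card_le_card (MvPolynomial.support_map_subset _ _)
    have h2 : f.support.card ≤ (n + d).choose d := aux_card n d f (le_of_eq hdeg)
    exact_mod_cast le_trans h1 h2
  have hbound : |MvPolynomial.eval p g - MvPolynomial.eval q g| < m := by
    have hsumabs : |MvPolynomial.eval p g - MvPolynomial.eval q g|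
        ≤ (g.support.card : ℝ) * (c * (d * M ^ d * δ)) := by
      rw [hdiff]
      refine le_trans (Finset.abs_sum_le_sum_abs _ _) ?_
      have := Finset.sum_le_card_nsmul g.support _ _ hterm
      rwa [nsmul_eq_mul] at this
    have hstep : (g.support.card : ℝ) * (c * (d * M ^ d * δ)) < K * δ := by
      have h1 : (g.support.card : ℝ) * (c * (d * M ^ d * δ))
          ≤ C * (c * (d * M ^ d * δ)) := by
        apply mul_le_mul_of_nonneg_right hcard
        positivity
      have h2 : C * (c * ((d:ℝ) * M ^ d * δ)) < C * (c * (C * M ^ d * δ)) := by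
        gcongr
        linarith
      have h3 : C * (c * (C * M ^ d * δ)) = K * δ := by rw [hKdef]; ring
      linarith
    have hfinal : K * δ ≤ m := by
      calc K * δ ≤ K * (m / K) := by gcongr
        _ = m := by field_simp
    linarith
  intro heq
  have hqabs := hm2 q hq
  rw [heq] at hbound
  rw [zero_sub, abs_neg] at hbound
  exact absurd hqabs (not_le.2 hbound)
end

section
/- Let n ≥ 1 and let f be a polynomial in n variables with rational coefficients, of degree d ≥ 1, evaluated on ℝⁿ. Let Q ⊂ ℝⁿ be nonempty and finite with f(q) ≠ 0 for all q ∈ Q. With c = ‖f‖∞, M ≥ max_{q∈Q} ‖q‖∞ + 1, 0 < m ≤ min_{q∈Q} |f(q)|, and 𝒹 = min{1, m / (C(n+d,d)² · M^d · c)}, the following holds: for every q ∈ Q and every r ∈ ℝⁿ with ‖r − q‖∞ ≤ 𝒹, the point r lies in the same connected component of S = {x ∈ ℝⁿ : f(x) ≠ 0} as q. -/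
/-!
On the sup-norm cube of radius `𝒹 ≤ 1` around `q`, all coordinates are bounded by `M`, so each
of the at most `C(n+d,d)` monomials of `f` moves by at most `d M^d 𝒹` along the segment from `q`
to `r`. Hence `f` moves by at most `C(n+d,d) c d M^d 𝒹 ≤ d m / C(n+d,d) < m ≤ |f(q)|` (using
`d < C(n+d,d)`), so `f` does not vanish on the segment, which is a connected subset of `S`
joining `q` to `r`.
-/

open Finset

theorem mem_connectedComponentIn_of_segment_subset {E : Type*} [AddCommGroup E] [Module ℝ E]
    [TopologicalSpace E] [ContinuousAdd E] [ContinuousSMul ℝ E] {S : Set E} {x y : E}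
    (h : segment ℝ x y ⊆ S) : y ∈ connectedComponentIn S x :=
  (convex_segment x y).isPreconnected.subset_connectedComponentIn (left_mem_segment ℝ x y) h
    (right_mem_segment ℝ x y)

theorem abs_prod_pow_sub_prod_pow_le {ι : Type*} (s : Finset ι) (α : ι → ℕ) {x y : ι → ℝ}
    {M δ : ℝ} (hM : 1 ≤ M) (hx : ∀ i ∈ s, |x i| ≤ M) (hy : ∀ i ∈ s, |y i| ≤ M)
    (hxy : ∀ i ∈ s, |x i - y i| ≤ δ) :
    |∏ i ∈ s, x i ^ α i - ∏ i ∈ s, y i ^ α i| ≤ (∑ i ∈ s, α i) * M ^ (∑ i ∈ s, α i) * δ := by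
  induction s using Finset.cons_induction with
  | empty => simp
  | cons a s ha ih =>
    simp only [mem_cons, forall_eq_or_imp] at hx hy hxy
    set P := ∏ i ∈ s, x i ^ α i
    set P' := ∏ i ∈ s, y i ^ α i
    have hP : |P| ≤ M ^ (∑ i ∈ s, α i) := by
      rw [abs_prod, ← prod_pow_eq_pow_sum]
      exact prod_le_prod (fun i _ ↦ abs_nonneg _)
        fun i hi ↦ (abs_pow _ _).trans_le (pow_le_pow_left₀ (abs_nonneg _) (hx.2 i hi) _)
    have hya : |y a ^ α a| ≤ M ^ α a :=
      (abs_pow _ _).trans_le (pow_le_pow_left₀ (abs_nonneg _) hy.1 _)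
    have hpow : |x a ^ α a - y a ^ α a| ≤ α a * M ^ α a * δ :=
      calc |x a ^ α a - y a ^ α a|
          ≤ |x a - y a| * α a * max |x a| |y a| ^ (α a - 1) := abs_pow_sub_pow_le ..
        _ ≤ δ * α a * M ^ α a := by
          have hmax : max |x a| |y a| ^ (α a - 1) ≤ M ^ α a :=
            (pow_le_pow_left₀ (le_max_of_le_left (abs_nonneg _)) (max_le hx.1 hy.1) _).trans
              (pow_le_pow_right₀ hM (Nat.sub_le _ _))
          have hδ : 0 ≤ δ := (abs_nonneg _).trans hxy.1
          exact mul_le_mul (mul_le_mul_of_nonneg_right hxy.1 (Nat.cast_nonneg _)) hmax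
            (by positivity) (mul_nonneg hδ (Nat.cast_nonneg _))
        _ = α a * M ^ α a * δ := by ring
    rw [prod_cons, prod_cons]
    calc |x a ^ α a * P - y a ^ α a * P'|
        = |(x a ^ α a - y a ^ α a) * P + y a ^ α a * (P - P')| := by ring_nf
      _ ≤ |x a ^ α a - y a ^ α a| * |P| + |y a ^ α a| * |P - P'| := by
        rw [← abs_mul, ← abs_mul]; exact abs_add_le _ _
      _ ≤ α a * M ^ α a * δ * M ^ (∑ i ∈ s, α i)
            + M ^ α a * ((∑ i ∈ s, α i) * M ^ (∑ i ∈ s, α i) * δ) := by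
        gcongr
        · exact (abs_nonneg _).trans hpow
        · exact ih hx.2 hy.2 hxy.2
      _ = (∑ i ∈ cons a s ha, α i) * M ^ (∑ i ∈ cons a s ha, α i) * δ := by
        rw [sum_cons, pow_add]; push_cast; ring

namespace MvPolynomial

theorem card_support_le_choose {R : Type*} [CommSemiring R] {n d : ℕ}
    (f : MvPolynomial (Fin n) R) (hf : f.totalDegree ≤ d) :
    #f.support ≤ (n + d).choose d := by
  classical
  -- pad each exponent of degree `≤ d` with a slack variable to an exponent of degree exactly `d`
  let pad : (Fin n →₀ ℕ) → (Fin (n + 1) →₀ ℕ) := fun α ↦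
    Finsupp.equivFunOnFinite.symm (Fin.cons (d - α.sum fun _ k ↦ k) α)
  have hmaps : Set.MapsTo pad f.support ((univ : Finset (Fin (n + 1))).finsuppAntidiag d) := by
    intro α hα
    have hα := (le_totalDegree hα).trans hf
    simp only [Finsupp.sum_fintype, implies_true] at hα
    simp [pad, Fin.sum_univ_succ, Finsupp.sum_fintype]
    omega
  have hinj : Set.InjOn pad f.support := fun α _ β _ h ↦
    Finsupp.ext fun i ↦ by simpa [pad] using DFunLike.congr_fun h i.succ
  calc #f.support ≤ #((univ : Finset (Fin (n + 1))).finsuppAntidiag d) :=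
        card_le_card_of_injOn pad hmaps hinj
    _ = (n + d).choose d := by
        rw [card_finsuppAntidiag_nat_eq_choose, Finset.card_univ, Fintype.card_fin]
        congr 1; omega

variable {σ : Type*} [Fintype σ]

theorem abs_eval_sub_eval_le (g : MvPolynomial σ ℝ) {d : ℕ} {c M : ℝ} (hg : g.totalDegree ≤ d)
    (hc : ∀ α, |g.coeff α| ≤ c) (hM : 1 ≤ M) {x y : σ → ℝ} (hx : ‖x‖ ≤ M) (hy : ‖y‖ ≤ M) :
    |eval x g - eval y g| ≤ #g.support * c * (d * M ^ d * dist x y) := by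
  have hmono : ∀ α ∈ g.support,
      |∏ i, x i ^ α i - ∏ i, y i ^ α i| ≤ d * M ^ d * dist x y := by
    intro α hα
    have hdeg : ∑ i, α i ≤ d := by
      simpa only [Finsupp.sum_fintype, implies_true] using (le_totalDegree hα).trans hg
    refine (abs_prod_pow_sub_prod_pow_le univ α hM (fun i _ ↦ (norm_le_pi_norm x i).trans hx)
      (fun i _ ↦ (norm_le_pi_norm y i).trans hy)
      (fun i _ ↦ (Real.dist_eq _ _).symm.trans_le (dist_le_pi_dist x y i))).trans ?_
    gcongr
  calc |eval x g - eval y g|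
      = |∑ α ∈ g.support, g.coeff α * (∏ i, x i ^ α i - ∏ i, y i ^ α i)| := by
        simp only [eval_eq', ← sum_sub_distrib, mul_sub]
    _ ≤ ∑ α ∈ g.support, |g.coeff α| * |∏ i, x i ^ α i - ∏ i, y i ^ α i| := by
        simpa only [abs_mul] using
          abs_sum_le_sum_abs (fun α ↦ g.coeff α * (∏ i, x i ^ α i - ∏ i, y i ^ α i)) g.support
    _ ≤ ∑ _α ∈ g.support, c * (d * M ^ d * dist x y) :=
        sum_le_sum fun α hα ↦ mul_le_mul (hc α) (hmono α hα) (abs_nonneg _)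
          ((abs_nonneg _).trans (hc α))
    _ = #g.support * c * (d * M ^ d * dist x y) := by rw [sum_const, nsmul_eq_mul]; ring

theorem eval_ne_zero_of_dist_le (g : MvPolynomial σ ℝ) {d : ℕ} {c C M m : ℝ}
    (hg : g.totalDegree ≤ d) (hc : ∀ α, |g.coeff α| ≤ c) (hC : #g.support ≤ C) (hdC : d < C)
    {q x : σ → ℝ} (hqM : ‖q‖ + 1 ≤ M) (hm : 0 < m) (hmq : m ≤ |eval q g|)
    (hx : dist x q ≤ min 1 (m / (C ^ 2 * M ^ d * c))) : eval x g ≠ 0 := by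
  have hc0 : 0 < c := by
    obtain ⟨α, hα⟩ := ne_zero_iff.mp fun h0 : g = 0 ↦ by simp [h0] at hmq; linarith
    exact (abs_pos.mpr hα).trans_le (hc α)
  have hM : 1 ≤ M := by linarith [norm_nonneg q]
  have hC0 : 0 < C := (Nat.cast_nonneg d).trans_lt hdC
  have hxM : ‖x‖ ≤ M := by
    linarith [norm_le_norm_add_norm_sub' x q, dist_eq_norm x q,
      min_le_left 1 (m / (C ^ 2 * M ^ d * c))]
  have hnear : |eval x g - eval q g| < m :=
    calc |eval x g - eval q g| ≤ #g.support * c * (d * M ^ d * dist x q) :=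
          abs_eval_sub_eval_le g hg hc hM hxM (hqM.trans' (by linarith [norm_nonneg q]))
      _ ≤ C * c * (d * M ^ d * (m / (C ^ 2 * M ^ d * c))) := by
          gcongr
          exact hx.trans (min_le_right _ _)
      _ = d * m / C := by field_simp
      _ < m := by rw [div_lt_iff₀ hC0]; nlinarith
  intro hx0
  rw [hx0, zero_sub, abs_neg] at hnear
  linarith

end MvPolynomial

theorem stmt11_general (n d : ℕ) (hn : 1 ≤ n) (f : MvPolynomial (Fin n) ℚ)
    (hdeg : f.totalDegree = d)
    (Q : Set (Fin n → ℝ))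
    (c : ℝ)
    (hc1 : ∀ mo : Fin n →₀ ℕ, |((f.coeff mo : ℚ) : ℝ)| ≤ c)
    (M : ℝ) (hM : ∀ q ∈ Q, ∀ i, |q i| + 1 ≤ M)
    (m : ℝ) (hm : 0 < m)
    (hm2 : ∀ q ∈ Q, m ≤ |MvPolynomial.eval q (MvPolynomial.map (algebraMap ℚ ℝ) f)|) :
    ∀ q ∈ Q, ∀ r : Fin n → ℝ,
      (∀ i, |r i - q i| ≤ min 1 (m / (((n + d).choose d : ℝ) ^ 2 * M ^ d * c))) →
      r ∈ connectedComponentIn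
        {x : Fin n → ℝ | MvPolynomial.eval x (MvPolynomial.map (algebraMap ℚ ℝ) f) ≠ 0} q := by
  intro q hq r hr
  set g := MvPolynomial.map (algebraMap ℚ ℝ) f
  set δ := min 1 (m / (((n + d).choose d : ℝ) ^ 2 * M ^ d * c))
  have hg : g.totalDegree ≤ d := by
    rw [← hdeg, MvPolynomial.totalDegree, MvPolynomial.totalDegree,
      MvPolynomial.support_map_of_injective f (algebraMap ℚ ℝ).injective]
  have hgc : ∀ α, |g.coeff α| ≤ c := fun α ↦ by
    simpa only [g, MvPolynomial.coeff_map, eq_ratCast] using hc1 α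
  have hsupp : (#g.support : ℝ) ≤ (n + d).choose d := by
    exact_mod_cast MvPolynomial.card_support_le_choose g hg
  have hdC : (d : ℝ) < (n + d).choose d := by
    have := (Nat.choose_succ_self_right d).symm.trans_le
      (Nat.choose_le_choose d (show d + 1 ≤ n + d by omega))
    exact_mod_cast this
  have hqM : ‖q‖ + 1 ≤ M := by
    have hM1 : 0 ≤ M - 1 := by linarith [abs_nonneg (q ⟨0, hn⟩), hM q hq ⟨0, hn⟩]
    have : ‖q‖ ≤ M - 1 := (pi_norm_le_iff_of_nonneg hM1).2
      fun i ↦ by rw [Real.norm_eq_abs]; linarith [hM q hq i]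
    linarith
  have hδ : 0 ≤ δ := (abs_nonneg _).trans (hr ⟨0, hn⟩)
  have hrq : dist r q ≤ δ := (dist_pi_le_iff hδ).2 fun i ↦ (Real.dist_eq _ _).trans_le (hr i)
  refine mem_connectedComponentIn_of_segment_subset fun x hx ↦ ?_
  have hxq : dist x q ≤ δ :=
    (convex_closedBall q δ).segment_subset (Metric.mem_closedBall_self hδ) hrq hx
  exact MvPolynomial.eval_ne_zero_of_dist_le g hg hgc hsupp hdC hqM hm (hm2 q hq) hxq

/-- With `c = ‖f‖∞`, `M ≥ max_{q∈Q} ‖q‖∞ + 1`, `0 < m ≤ min_{q∈Q} |f(q)|` and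
`𝒹 = min 1 (m / (C(n+d,d)² M^d c))`: every point `r` with `‖r - q‖∞ ≤ 𝒹` lies in the same
connected component of `S = {x | f(x) ≠ 0}` as `q`. -/
theorem stmt11 (n d : ℕ) (hn : 1 ≤ n) (f : MvPolynomial (Fin n) ℚ)
    (hdeg : f.totalDegree = d) (hd1 : 1 ≤ d)
    (Q : Set (Fin n → ℝ)) (hQne : Q.Nonempty) (hQfin : Q.Finite)
    (hQ : ∀ q ∈ Q, MvPolynomial.eval q (MvPolynomial.map (algebraMap ℚ ℝ) f) ≠ 0)
    (c : ℝ)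
    (hc1 : ∀ mo : Fin n →₀ ℕ, |((f.coeff mo : ℚ) : ℝ)| ≤ c)
    (hc2 : ∃ mo : Fin n →₀ ℕ, |((f.coeff mo : ℚ) : ℝ)| = c)
    (M : ℝ) (hM : ∀ q ∈ Q, ∀ i, |q i| + 1 ≤ M)
    (m : ℝ) (hm : 0 < m)
    (hm2 : ∀ q ∈ Q, m ≤ |MvPolynomial.eval q (MvPolynomial.map (algebraMap ℚ ℝ) f)|) :
    ∀ q ∈ Q, ∀ r : Fin n → ℝ,
      (∀ i, |r i - q i| ≤ min 1 (m / (((n + d).choose d : ℝ) ^ 2 * M ^ d * c))) →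
      r ∈ connectedComponentIn
        {x : Fin n → ℝ | MvPolynomial.eval x (MvPolynomial.map (algebraMap ℚ ℝ) f) ≠ 0} q :=
  stmt11_general n d hn f hdeg Q c hc1 M hM m hm hm2
end

section
/- Let f be a polynomial in n variables with complex coefficients, let A ∈ GLₙ(ℂ) with entries a_{i,j}, and fix 1 ≤ k ≤ n. Assume the bottom-right (n−k) × (n−k) submatrix B_k of A is invertible, let b_{i,j,k} denote the (i,j) entry of B_k⁻¹, let b_{i,j,0} denote the (i,j) entry of A⁻¹, and let σ₁,…,σ_{k−1} ∈ ℂ. Write f^A for the polynomial x ↦ f(A·x). Then for every ξ ∈ ℂⁿ the following are equivalent: (i) ξ_ℓ = σ_ℓ for 1 ≤ ℓ ≤ k−1, f^A(ξ) = 0, and (∂f^A/∂x_j)(ξ) = 0 for k+1 ≤ j ≤ n; (ii) the point η = A·ξ satisfies Σ_{i=1}^n b_{ℓ,i,0} ηᵢ = σ_ℓ for 1 ≤ ℓ ≤ k−1, f(η) = 0, and for every 1 ≤ ℓ ≤ n−k, (∂f/∂x_{k+ℓ})(η) + Σ_{i=1}^k ( Σ_{j=1}^{n−k} a_{i,j+k}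 · b_{j,ℓ,k} ) · (∂f/∂x_i)(η) = 0. -/
/-- The bottom-right `(n-k) × (n-k)` submatrix of an `n × n` matrix
(rows and columns `k+1, …, n` in 1-indexed notation). -/
def lowerRight {R : Type*} (n k : ℕ) (hk : k ≤ n) (A : Matrix (Fin n) (Fin n) R) :
    Matrix (Fin (n - k)) (Fin (n - k)) R :=
  A.submatrix (fun i => ⟨k + i.1, by have := i.isLt; omega⟩)
    (fun j => ⟨k + j.1, by have := j.isLt; omega⟩)

open MvPolynomial Matrix

lemma my_pderiv_bind₁ {n : ℕ} (s : Fin n → MvPolynomial (Fin n) ℂ)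
    (f : MvPolynomial (Fin n) ℂ) (j : Fin n) :
    pderiv j (bind₁ s f)
      = ∑ i, bind₁ s (pderiv i f) * pderiv j (s i) := by
  induction f using MvPolynomial.induction_on with
  | C a => simp
  | add p q hp hq =>
      simp only [map_add, hp, hq, add_mul, Finset.sum_add_distrib]
  | mul_X p i hp =>
      classical
      have key : ∀ i' : Fin n,
          bind₁ s (pderiv i' (p * X i)) * pderiv j (s i')
            = bind₁ s (pderiv i' p) * pderiv j (s i') * s i
              + (if i = i' then bind₁ s p * pderiv j (s i') else 0) := by
        intro i'
        rw [pderiv_mul, map_add, _root_.map_mul, bind₁_X_right, _root_.map_mul, add_mul, pderiv_X]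
        congr 1
        · ring
        · rw [Pi.single_apply]
          by_cases h : i = i' <;> simp [h]
      rw [_root_.map_mul, bind₁_X_right, pderiv_mul, hp,
        Finset.sum_congr rfl (fun i' _ => key i'), Finset.sum_add_distrib,
        Finset.sum_ite_eq, Finset.sum_mul]
      simp

lemma eval_subst {n : ℕ} (A : Matrix (Fin n) (Fin n) ℂ)
    (f : MvPolynomial (Fin n) ℂ) (ξ : Fin n → ℂ) :
    MvPolynomial.eval ξ
        (bind₁ (fun i => ∑ j, MvPolynomial.C (A i j) * X j) f)
      = MvPolynomial.eval (A.mulVec ξ) f := by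
  have h1 : ∀ (g : Fin n → ℂ) (p : MvPolynomial (Fin n) ℂ),
      MvPolynomial.eval g p = aeval g p := fun g p => by
    rw [aeval_def]; rfl
  have h2 : (fun i => aeval ξ (∑ j, (MvPolynomial.C (A i j) : MvPolynomial (Fin n) ℂ) * X j))
      = A.mulVec ξ := by
    funext i
    rw [← h1]
    simp [Matrix.mulVec, dotProduct]
  rw [h1, aeval_bind₁, h2, ← h1]

lemma eval_chain {n : ℕ} (A : Matrix (Fin n) (Fin n) ℂ)
    (f : MvPolynomial (Fin n) ℂ) (ξ : Fin n → ℂ) (j : Fin n) :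
    MvPolynomial.eval ξ
        (pderiv j (bind₁ (fun i => ∑ j', MvPolynomial.C (A i j') * X j') f))
      = ∑ i, A i j * MvPolynomial.eval (A.mulVec ξ) (pderiv i f) := by
  classical
  rw [my_pderiv_bind₁, map_sum]
  apply Finset.sum_congr rfl
  intro i _
  rw [_root_.map_mul, eval_subst]
  have : MvPolynomial.eval ξ (pderiv j (∑ j', MvPolynomial.C (A i j') * X j')) = A i j := by
    rw [map_sum, map_sum]
    have : ∀ j' : Fin n, MvPolynomial.eval ξ (pderiv j (MvPolynomial.C (A i j') * X j'))
        = if j = j' then A i j' else 0 := by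
      intro j'
      rw [pderiv_C_mul, pderiv_X, Pi.single_apply]
      by_cases h : j = j'
      · simp [h]
      · rw [if_neg (fun hh : j' = j => h hh.symm), if_neg h]
        simp
    rw [Finset.sum_congr rfl (fun j' _ => this j'), Finset.sum_ite_eq]
    simp
  rw [this]
  try ring

lemma sum_split {m k : ℕ} (hk : k ≤ m) (F : Fin m → ℂ) :
    ∑ i, F i = (∑ i : Fin k, F ⟨i.1, lt_of_lt_of_le i.isLt hk⟩)
      + ∑ i : Fin (m - k), F ⟨k + i.1, by have := i.isLt; omega⟩ := by
  have e : k + (m - k) = m := by omega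
  have h1 : ∑ i, F i = ∑ i : Fin (k + (m - k)), F (Fin.cast e i) :=
    (Fintype.sum_equiv (finCongr e) _ _ (by simp)).symm
  rw [h1, Fin.sum_univ_add]
  rfl

lemma inv_system {m : ℕ} (B : Matrix (Fin m) (Fin m) ℂ) (hB : IsUnit B.det)
    (v w : Fin m → ℂ) :
    w + B.mulVec v = 0 ↔ v + B⁻¹.mulVec w = 0 := by
  constructor
  · intro h
    have hv : B.mulVec v = -w := by
      have := congrFun h
      funext l; have := this l; simp at this ⊢; linear_combination this
    have : v = B⁻¹.mulVec (-w) := by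
      rw [← hv, Matrix.mulVec_mulVec, Matrix.nonsing_inv_mul _ hB, Matrix.one_mulVec]
    rw [this, Matrix.mulVec_neg]
    simp
  · intro h
    have hv : v = -(B⁻¹.mulVec w) := by
      funext l; have := congrFun h l; simp at this ⊢; linear_combination this
    rw [hv, Matrix.mulVec_neg, Matrix.mulVec_mulVec, Matrix.mul_nonsing_inv _ hB,
      Matrix.one_mulVec]
    simp

lemma part3 {n k : ℕ} (hkn : k ≤ n) (A : Matrix (Fin n) (Fin n) ℂ)
    (hB : IsUnit (lowerRight n k hkn A).det) (g : Fin n → ℂ) :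
    (∀ j : Fin n, k ≤ j.1 → ∑ i, A i j * g i = 0) ↔
    (∀ l : Fin (n - k),
      g ⟨k + l.1, by have := l.isLt; omega⟩ +
      ∑ i : Fin k, (∑ j : Fin (n - k),
          A ⟨i.1, (by have := i.isLt; exact ⟨by omega, trivial⟩ : i.1 < n ∧ True).1⟩ ⟨k + j.1, by have := j.isLt; omega⟩ *
            (lowerRight n k hkn A)⁻¹ j l) * g ⟨i.1, (by have := i.isLt; exact ⟨by omega, trivial⟩ : i.1 < n ∧ True).1⟩ = 0) := by
  classical
  set B := lowerRight n k hkn A with hBdef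
  set v : Fin (n - k) → ℂ := fun l => g ⟨k + l.1, by have := l.isLt; omega⟩ with hv
  set w : Fin (n - k) → ℂ := fun l => ∑ i : Fin k,
    A ⟨i.1, (by have := i.isLt; exact ⟨by omega, trivial⟩ : i.1 < n ∧ True).1⟩ ⟨k + l.1, by have := l.isLt; omega⟩ *
      g ⟨i.1, (by have := i.isLt; exact ⟨by omega, trivial⟩ : i.1 < n ∧ True).1⟩ with hw
  have hBT : IsUnit Bᵀ.det := by rwa [Matrix.det_transpose]
  have hsum : ∀ (l : Fin (n - k)) (j : Fin n), j.1 = k + l.1 →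
      ∑ i, A i j * g i = w l + Bᵀ.mulVec v l := by
    intro l j hj
    have hj' : j = ⟨k + l.1, by have := l.isLt; omega⟩ := Fin.ext hj
    rw [hj', sum_split hkn]
    congr 1
  have key : ∀ l : Fin (n - k),
      (∑ i : Fin k, (∑ j : Fin (n - k),
          A ⟨i.1, (by have := i.isLt; exact ⟨by omega, trivial⟩ : i.1 < n ∧ True).1⟩ ⟨k + j.1, by have := j.isLt; omega⟩ *
            B⁻¹ j l) * g ⟨i.1, (by have := i.isLt; exact ⟨by omega, trivial⟩ : i.1 < n ∧ True).1⟩)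
        = Bᵀ⁻¹.mulVec w l := by
    intro l
    have h1 : Bᵀ⁻¹.mulVec w l = ∑ j : Fin (n - k), B⁻¹ j l * w j := by
      rw [← Matrix.transpose_nonsing_inv]
      simp [Matrix.mulVec, dotProduct, Matrix.transpose_apply]
    rw [h1]
    calc (∑ i : Fin k, (∑ j : Fin (n - k),
          A ⟨i.1, (by have := i.isLt; exact ⟨by omega, trivial⟩ : i.1 < n ∧ True).1⟩ ⟨k + j.1, by have := j.isLt; omega⟩ *
            B⁻¹ j l) * g ⟨i.1, (by have := i.isLt; exact ⟨by omega, trivial⟩ : i.1 < n ∧ True).1⟩)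
        = ∑ i : Fin k, ∑ j : Fin (n - k),
            A ⟨i.1, (by have := i.isLt; exact ⟨by omega, trivial⟩ : i.1 < n ∧ True).1⟩ ⟨k + j.1, by have := j.isLt; omega⟩ *
              B⁻¹ j l * g ⟨i.1, (by have := i.isLt; exact ⟨by omega, trivial⟩ : i.1 < n ∧ True).1⟩ := by
          apply Finset.sum_congr rfl; intro i _; rw [Finset.sum_mul]
      _ = ∑ j : Fin (n - k), ∑ i : Fin k,
            A ⟨i.1, (by have := i.isLt; exact ⟨by omega, trivial⟩ : i.1 < n ∧ True).1⟩ ⟨k + j.1, by have := j.isLt; omega⟩ *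
              B⁻¹ j l * g ⟨i.1, (by have := i.isLt; exact ⟨by omega, trivial⟩ : i.1 < n ∧ True).1⟩ := Finset.sum_comm
      _ = ∑ j : Fin (n - k), B⁻¹ j l * w j := by
          apply Finset.sum_congr rfl; intro j _
          rw [hw, Finset.mul_sum]
          apply Finset.sum_congr rfl; intro i _
          ring
  have hiv := inv_system Bᵀ hBT v w
  have hfun : ∀ (a b : Fin (n - k) → ℂ), a + b = 0 ↔ ∀ l, a l + b l = 0 :=
    fun a b => ⟨fun h l => congrFun h l, fun h => funext fun l => h l⟩
  rw [hfun, hfun] at hiv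
  constructor
  · intro h l
    rw [key l]
    exact hiv.mp (fun l' => by
      rw [← hsum l' ⟨k + l'.1, by have := l'.isLt; omega⟩ rfl]
      exact h _ (Nat.le_add_right k l'.1)) l
  · intro h j hj
    have hl : (⟨j.1 - k, by have := j.isLt; omega⟩ : Fin (n - k)).1 + k = j.1 := by
      simp; omega
    rw [hsum ⟨j.1 - k, by have := j.isLt; omega⟩ j (by simp; omega)]
    exact hiv.mpr (fun l' => by rw [← key l']; exact h l') _

/-- Lemma on the polar system after a change of variables: for an invertible `A` whose
bottom-right block `B_k` is invertible, a point `ξ` solves the critical-point system of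
`f^A = f(A·x)` truncated at level `k` (with specialisation values `σ`) if and only if
`η = A·ξ` solves the corresponding system `𝒫_k` expressed in terms of `f`, the entries of
`A`, of `A⁻¹` and of `B_k⁻¹`. -/
theorem stmt13 (n k : ℕ) (hk1 : 1 ≤ k) (hkn : k ≤ n)
    (f : MvPolynomial (Fin n) ℂ)
    (A : Matrix (Fin n) (Fin n) ℂ) (hA : IsUnit A.det)
    (hB : IsUnit (lowerRight n k hkn A).det)
    (σ : Fin n → ℂ) :
    ∀ ξ : Fin n → ℂ,
      ((∀ l : Fin n, l.1 + 1 < k → ξ l = σ l) ∧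
        MvPolynomial.eval ξ
          (MvPolynomial.bind₁
            (fun i => ∑ j, MvPolynomial.C (A i j) * MvPolynomial.X j) f) = 0 ∧
        (∀ j : Fin n, k ≤ j.1 →
          MvPolynomial.eval ξ
            (MvPolynomial.pderiv j
              (MvPolynomial.bind₁
                (fun i => ∑ j', MvPolynomial.C (A i j') * MvPolynomial.X j') f)) = 0))
      ↔
      ((∀ l : Fin n, l.1 + 1 < k → ∑ i, A⁻¹ l i * A.mulVec ξ i = σ l) ∧
        MvPolynomial.eval (A.mulVec ξ) f = 0 ∧
        (∀ l : Fin (n - k),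
          MvPolynomial.eval (A.mulVec ξ)
            (MvPolynomial.pderiv (⟨k + l.1, by have := l.isLt; omega⟩ : Fin n) f) +
          ∑ i : Fin k,
            (∑ j : Fin (n - k),
              A ⟨i.1, by have := i.isLt; omega⟩ ⟨k + j.1, by have := j.isLt; omega⟩ *
                (lowerRight n k hkn A)⁻¹ j l) *
            MvPolynomial.eval (A.mulVec ξ)
              (MvPolynomial.pderiv (⟨i.1, by have := i.isLt; omega⟩ : Fin n) f) = 0)) := by
  intro ξ
  have key1 : ∀ l : Fin n, (∑ i, A⁻¹ l i * A.mulVec ξ i) = ξ l := by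
    intro l
    have h : A⁻¹.mulVec (A.mulVec ξ) = ξ := by
      rw [Matrix.mulVec_mulVec, Matrix.nonsing_inv_mul _ hA, Matrix.one_mulVec]
    exact congrFun h l
  refine and_congr (forall_congr' fun l => imp_congr_right fun _ => by rw [key1 l])
    (and_congr (by rw [eval_subst]) ?_)
  have h3 := part3 hkn A hB
    (fun i => MvPolynomial.eval (A.mulVec ξ) (MvPolynomial.pderiv i f))
  exact Iff.trans
    (forall_congr' fun j => imp_congr_right fun _ => by rw [eval_chain]) h3
end

section
/- Let F be an integral domain, let T be a nonempty finite subset of F, and let n ≥ 1. Then the number of matrices A ∈ T^{n×n} (all n² entries belonging to T) for which there exists 1 ≤ k ≤ n−1 such that the bottom-right (n−k) × (n−k) submatrix of A has zero determinant is at most (n(n−1)/2) · |T|^{n²−1}. Consequently, if the entries of A are chosen independently and uniformly at random from T, the probability that all bottom-right square submatrices of A are invertible is at least 1 − n(n−1)/(2|T|). -/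
open Matrix Finset

namespace Matrix

theorem det_eq_det_add_mul_adjugate {ι R : Type*} [Fintype ι] [DecidableEq ι] [CommRing R]
    {M M' : Matrix ι ι R} {i j : ι} (h : ∀ i' j', (i', j') ≠ (i, j) → M' i' j' = M i' j') :
    M'.det = M.det + (M' i j - M i j) * M.adjugate j i := by
  set c := M' i j - M i j
  have hrow : M' = M.updateRow i (M i + c • Pi.single j 1) := by
    ext i' j'
    by_cases hi : i' = i
    · subst hi
      by_cases hj : j' = j
      · subst hj; simp [c]
      · simp [hj, h i' j' (by simp [hj])]
    · simp [hi, h i' j' (by simp [hi])]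
  rw [hrow, det_updateRow_add, det_updateRow_smul, updateRow_eq_self, adjugate_apply]

section WithEntriesIn

variable {m n α : Type*} [Fintype m] [Fintype n] [DecidableEq m] [DecidableEq n]

def withEntriesIn (m n : Type*) [Fintype m] [Fintype n] [DecidableEq m] [DecidableEq n]
    (T : Finset α) : Finset (Matrix m n α) :=
  Fintype.piFinset fun _ => Fintype.piFinset fun _ => T

theorem mem_withEntriesIn {T : Finset α} {A : Matrix m n α} :
    A ∈ withEntriesIn m n T ↔ ∀ i j, A i j ∈ T :=
  Fintype.mem_piFinset.trans (forall_congr' fun _ => Fintype.mem_piFinset)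

theorem card_withEntriesIn (T : Finset α) :
    #(withEntriesIn m n T) = #T ^ (Fintype.card m * Fintype.card n) :=
  (Fintype.card_piFinset _).trans (by simp [pow_mul'])

theorem card_le_pow_of_eq_of_eq_off_entry {T : Finset α} {s : Finset (Matrix m n α)}
    (hs : s ⊆ withEntriesIn m n T) (p : m × n)
    (hp : ∀ A ∈ s, ∀ B ∈ s, (∀ i j, (i, j) ≠ p → A i j = B i j) → A = B) :
    #s ≤ #T ^ (Fintype.card m * Fintype.card n - 1) := by
  calc #s ≤ #(Fintype.piFinset fun _ : {q // q ≠ p} => T) := by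
        refine card_le_card_of_injOn (fun A q => A q.1.1 q.1.2) (fun A hA => ?_) ?_
        · simpa [Fintype.mem_piFinset] using fun i j _ => mem_withEntriesIn.mp (hs hA) i j
        · intro A hA B hB hAB
          exact hp A hA B hB fun i j hij => congrFun hAB ⟨(i, j), hij⟩
    _ = #T ^ (Fintype.card m * Fintype.card n - 1) := by
        simp [Fintype.card_piFinset, Fintype.card_subtype_compl]

end WithEntriesIn

end Matrix

section LowerRightDet

variable {R : Type*} [CommRing R] {n k : ℕ}

-- Drops the proof argument of `lowerRight`, so that `k` can range freely (the value past `n` is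
-- never used).
def lowerRightDet (n k : ℕ) (A : Matrix (Fin n) (Fin n) R) : R :=
  if h : k ≤ n then (lowerRight n k h A).det else 1

theorem lowerRightDet_of_le (h : k ≤ n) (A : Matrix (Fin n) (Fin n) R) :
    lowerRightDet n k A = (lowerRight n k h A).det :=
  dif_pos h

theorem lowerRightDet_self (A : Matrix (Fin n) (Fin n) R) : lowerRightDet n n A = 1 := by
  rw [lowerRightDet_of_le le_rfl]
  have : IsEmpty (Fin (n - n)) := by rw [Nat.sub_self]; infer_instance
  exact det_isEmpty

theorem lowerRightDet_eq_add_mul (hk : k < n) {A A' : Matrix (Fin n) (Fin n) R}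
    (h : ∀ i j, (i, j) ≠ (⟨k, hk⟩, ⟨k, hk⟩) → A' i j = A i j) :
    lowerRightDet n k A' =
      lowerRightDet n k A +
        (A' ⟨k, hk⟩ ⟨k, hk⟩ - A ⟨k, hk⟩ ⟨k, hk⟩) * lowerRightDet n (k + 1) A := by
  have e : n - (k + 1) + 1 = n - k := by omega
  -- the corner at `k`, reindexed so that its `(0, 0)` minor is the corner at `k + 1`
  let M : Matrix (Fin n) (Fin n) R → Matrix (Fin (n - (k + 1) + 1)) (Fin (n - (k + 1) + 1)) R :=
    fun B => (lowerRight n k hk.le B).submatrix (finCongr e) (finCongr e)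
  have hM : ∀ B, lowerRightDet n k B = (M B).det := fun B => by
    rw [lowerRightDet_of_le hk.le, det_submatrix_equiv_self]
  have hminor : (M A).submatrix Fin.succ Fin.succ = lowerRight n (k + 1) hk A := by
    ext i j
    simp only [M, lowerRight, submatrix_apply, finCongr_apply, Fin.val_cast, Fin.val_succ]
    congr 1 <;> ext <;> simp only <;> omega
  rw [hM, hM, det_eq_det_add_mul_adjugate (i := 0) (j := 0), adjugate_fin_succ_eq_det_submatrix,
    Fin.succAbove_zero, hminor, lowerRightDet_of_le hk]
  · have h00 : ∀ B, M B 0 0 = B ⟨k, hk⟩ ⟨k, hk⟩ := fun B => rfl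
    simp [h00]
  · intro i j hij
    refine h _ _ fun hkk => hij ?_
    simp only [finCongr_apply, Prod.mk.injEq, Fin.ext_iff, Fin.val_cast, Fin.val_zero] at hkk ⊢
    omega

theorem eq_of_lowerRightDet_eq_zero [NoZeroDivisors R] (hk : k < n)
    {A A' : Matrix (Fin n) (Fin n) R}
    (h : ∀ i j, (i, j) ≠ (⟨k, hk⟩, ⟨k, hk⟩) → A' i j = A i j)
    (hA : lowerRightDet n k A = 0) (hA' : lowerRightDet n k A' = 0)
    (hA₁ : lowerRightDet n (k + 1) A ≠ 0) : A' = A := by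
  have hkk : A' ⟨k, hk⟩ ⟨k, hk⟩ = A ⟨k, hk⟩ ⟨k, hk⟩ := by
    have := lowerRightDet_eq_add_mul hk h
    rw [hA, hA', zero_add, eq_comm, mul_eq_zero, sub_eq_zero] at this
    exact this.resolve_right hA₁
  ext i j
  by_cases hij : (i, j) = (⟨k, hk⟩, ⟨k, hk⟩)
  · obtain ⟨rfl, rfl⟩ := Prod.mk.inj hij
    exact hkk
  · exact h i j hij

theorem exists_lowerRightDet_eq_zero_and_succ_ne_zero [Nontrivial R]
    {A : Matrix (Fin n) (Fin n) R} (h : ∃ k ∈ Icc 1 (n - 1), lowerRightDet n k A = 0) :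
    ∃ k ∈ Icc 1 (n - 1), lowerRightDet n k A = 0 ∧ lowerRightDet n (k + 1) A ≠ 0 := by
  classical
  obtain ⟨k, hk, hk0⟩ := h
  let P : ℕ → Prop := fun j => 1 ≤ j ∧ lowerRightDet n j A = 0
  have hP : P (Nat.findGreatest P (n - 1)) :=
    Nat.findGreatest_spec (mem_Icc.mp hk).2 ⟨(mem_Icc.mp hk).1, hk0⟩
  have hle : Nat.findGreatest P (n - 1) ≤ n - 1 := Nat.findGreatest_le _
  refine ⟨_, mem_Icc.mpr ⟨hP.1, hle⟩, hP.2, fun hz => ?_⟩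
  by_cases hlt : Nat.findGreatest P (n - 1) + 1 ≤ n - 1
  · exact Nat.findGreatest_is_greatest (Nat.lt_succ_self _) hlt ⟨Nat.le_add_left 1 _, hz⟩
  · rw [show Nat.findGreatest P (n - 1) + 1 = n by omega, lowerRightDet_self] at hz
    exact one_ne_zero hz

variable [DecidableEq R]

theorem card_filter_lowerRightDet_le [NoZeroDivisors R] (T : Finset R) (hk : k < n) :
    #{A ∈ withEntriesIn (Fin n) (Fin n) T |
        lowerRightDet n k A = 0 ∧ lowerRightDet n (k + 1) A ≠ 0} ≤ #T ^ (n ^ 2 - 1) := by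
  refine (card_le_pow_of_eq_of_eq_off_entry (filter_subset _ _) (⟨k, hk⟩, ⟨k, hk⟩) ?_)
    |>.trans_eq (by rw [Fintype.card_fin, sq])
  intro A hA B hB hAB
  obtain ⟨-, hA₀, -⟩ := mem_filter.mp hA
  obtain ⟨-, hB₀, hB₁⟩ := mem_filter.mp hB
  exact eq_of_lowerRightDet_eq_zero hk hAB hB₀ hA₀ hB₁

def withSingularCorner (n : ℕ) (T : Finset R) : Finset (Matrix (Fin n) (Fin n) R) :=
  (Icc 1 (n - 1)).biUnion fun k => {A ∈ withEntriesIn (Fin n) (Fin n) T | lowerRightDet n k A = 0}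

theorem withSingularCorner_subset (T : Finset R) :
    withSingularCorner n T ⊆ withEntriesIn (Fin n) (Fin n) T :=
  biUnion_subset.mpr fun _ _ => filter_subset _ _

theorem coe_withSingularCorner (T : Finset R) :
    (withSingularCorner n T : Set (Matrix (Fin n) (Fin n) R)) =
      {A | (∀ i j, A i j ∈ T) ∧
        ∃ k, ∃ _ : 1 ≤ k, ∃ hk2 : k ≤ n - 1, (lowerRight n k (by omega) A).det = 0} := by
  ext A
  simp [withSingularCorner, mem_withEntriesIn, ← lowerRightDet_of_le]
  grind

theorem coe_withEntriesIn_sdiff_withSingularCorner (T : Finset R) :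
    ((withEntriesIn (Fin n) (Fin n) T \ withSingularCorner n T :
        Finset (Matrix (Fin n) (Fin n) R)) : Set (Matrix (Fin n) (Fin n) R)) =
      {A | (∀ i j, A i j ∈ T) ∧
        ∀ k, 1 ≤ k → ∀ hk2 : k ≤ n - 1, (lowerRight n k (by omega) A).det ≠ 0} := by
  ext A
  simp [withSingularCorner, mem_withEntriesIn, ← lowerRightDet_of_le]
  grind

theorem card_withSingularCorner_le [NoZeroDivisors R] [Nontrivial R] (T : Finset R) :
    #(withSingularCorner n T) ≤ (n - 1) * #T ^ (n ^ 2 - 1) := by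
  calc _ ≤ #((Icc 1 (n - 1)).biUnion fun k => {A ∈ withEntriesIn (Fin n) (Fin n) T |
            lowerRightDet n k A = 0 ∧ lowerRightDet n (k + 1) A ≠ 0}) := by
        refine card_le_card fun A hA => ?_
        obtain ⟨k, hk, hkA⟩ := mem_biUnion.mp hA
        obtain ⟨hAT, hA₀⟩ := mem_filter.mp hkA
        obtain ⟨k', hk', hA'⟩ := exists_lowerRightDet_eq_zero_and_succ_ne_zero ⟨k, hk, hA₀⟩
        exact mem_biUnion.mpr ⟨k', hk', mem_filter.mpr ⟨hAT, hA'⟩⟩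
    _ ≤ ∑ k ∈ Icc 1 (n - 1), #T ^ (n ^ 2 - 1) := by
        refine card_biUnion_le.trans (sum_le_sum fun k hk => ?_)
        exact card_filter_lowerRightDet_le T (by have := mem_Icc.mp hk; omega)
    _ = (n - 1) * #T ^ (n ^ 2 - 1) := by simp

end LowerRightDet

theorem Nat.sub_one_le_choose_two (n : ℕ) : n - 1 ≤ n.choose 2 := by
  cases n with
  | zero => simp
  | succ n => simp [Nat.choose_succ_succ]

theorem cast_choose_two_mul_pow_sub_one {q : ℝ} (hq : q ≠ 0) {n : ℕ} (hn : 1 ≤ n) :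
    (n.choose 2 : ℝ) * q ^ (n ^ 2 - 1) = n * (n - 1) / (2 * q) * q ^ (n ^ 2) := by
  obtain ⟨N, hN⟩ : ∃ N, n ^ 2 = N + 1 :=
    ⟨n ^ 2 - 1, by have := Nat.one_le_pow 2 n hn; omega⟩
  rw [Nat.cast_choose_two, hN, Nat.add_sub_cancel, pow_succ]
  field_simp

/-- Over an integral domain `F` and a nonempty finite set `T ⊆ F`: the number of `n × n`
matrices with entries in `T` for which some bottom-right `(n-k) × (n-k)` submatrix
(`1 ≤ k ≤ n-1`) is singular is at most `(n(n-1)/2)·|T|^(n²-1)`; consequently, the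
proportion of matrices with entries in `T` all of whose bottom-right square submatrices
are invertible is at least `1 - n(n-1)/(2|T|)`. -/
theorem stmt15 (F : Type*) [CommRing F] [IsDomain F]
    (T : Finset F) (hT : T.Nonempty) (n : ℕ) (hn : 1 ≤ n) :
    {A : Matrix (Fin n) (Fin n) F | (∀ i j, A i j ∈ T) ∧
        ∃ k, ∃ _ : 1 ≤ k, ∃ hk2 : k ≤ n - 1,
          (lowerRight n k (by omega) A).det = 0}.encard
      ≤ ((n * (n - 1) / 2 * T.card ^ (n ^ 2 - 1) : ℕ) : ℕ∞) ∧
    (1 - (n * (n - 1) : ℝ) / (2 * T.card)) ≤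
      ({A : Matrix (Fin n) (Fin n) F | (∀ i j, A i j ∈ T) ∧
          ∀ k, 1 ≤ k → ∀ hk2 : k ≤ n - 1, (lowerRight n k (by omega) A).det ≠ 0}.ncard : ℝ) /
        (T.card ^ (n ^ 2) : ℝ) := by
  classical
  set B := withSingularCorner n T
  have hB : #B ≤ n.choose 2 * #T ^ (n ^ 2 - 1) :=
    (card_withSingularCorner_le T).trans (Nat.mul_le_mul_right _ (Nat.sub_one_le_choose_two n))
  have hBG : #(withEntriesIn (Fin n) (Fin n) T \ B) + #B = #T ^ n ^ 2 := by
    rw [card_sdiff_add_card_eq_card (withSingularCorner_subset T), card_withEntriesIn,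
      Fintype.card_fin, sq]
  constructor
  · rw [← coe_withSingularCorner, Set.encard_coe_eq_coe_finsetCard, ← Nat.choose_two_right]
    exact_mod_cast hB
  · rw [← coe_withEntriesIn_sdiff_withSingularCorner, Set.ncard_coe_finset]
    have hq : (0 : ℝ) < #T := by exact_mod_cast hT.card_pos
    calc (1 - (n * (n - 1) : ℝ) / (2 * #T))
        = (#T ^ n ^ 2 - n.choose 2 * #T ^ (n ^ 2 - 1) : ℝ) / #T ^ n ^ 2 := by
          rw [cast_choose_two_mul_pow_sub_one hq.ne' hn]
          field_simp
      _ ≤ _ := by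
          gcongr
          have hBG' : (#(withEntriesIn (Fin n) (Fin n) T \ B) : ℝ) + #B = #T ^ n ^ 2 := by
            exact_mod_cast hBG
          have hB' : (#B : ℝ) ≤ n.choose 2 * #T ^ (n ^ 2 - 1) := by exact_mod_cast hB
          linarith
end
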